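/- arXiv:math/0701836 — 4 statements merged into one kernel-verified Lean document; each statement's English description precedes it below -/
import Mathlib

section
/- Let X be a set and σ : X → X a bijection such that for every integer r ≥ 1 the fixed-point set of σ^r is finite, of cardinality N_r. Let a(n) denote the number of n-element subsets S ⊆ X with σ(S) = S, and let ā(n) denote the number of size-n multisets of elements of X that are invariant under σ (with a(0) = ā(0) = 1). Define the formal power series Z(x) = exp(Σ_{r≥1} N_r x^r / r) ∈ ℚ[[x]]. Then (Σ_{n≥0} a(n) x^n) · Z(x²) = Z(x) and Σ_{n≥0} ā(n) x^n = Z(x). -/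
/-- The exponential of a formal power series (intended for series with zero
constant term): `expPS f = ∑_{m≥0} f^m / m!`, computed coefficientwise
(the sum is finite in each degree when `f` has zero constant term). -/
noncomputable def expPS (f : PowerSeries ℚ) : PowerSeries ℚ :=
  PowerSeries.mk fun n => ∑ m ∈ Finset.range (n + 1),
    (PowerSeries.coeff n (f ^ m)) / (Nat.factorial m)

/-- Substitution of `x²` in a formal power series: `(substSq Z)(x) = Z(x²)`. -/
noncomputable def substSq (Z : PowerSeries ℚ) : PowerSeries ℚ :=
  PowerSeries.mk fun n => if 2 ∣ n then PowerSeries.coeff (n / 2) Z else 0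

open Function Multiset

namespace ZetaAux

variable {X : Type*} {σ : X → X}

lemma count_apply [DecidableEq X] (hσ : Function.Injective σ) {M : Multiset X}
    (hM : Multiset.map σ M = M) (x : X) : Multiset.count (σ x) M = Multiset.count x M := by
  conv_lhs => rw [← hM]
  exact Multiset.count_map_eq_count' σ M hσ x

lemma count_iterate [DecidableEq X] (hσ : Function.Injective σ) {M : Multiset X}
    (hM : Multiset.map σ M = M) (x : X) (k : ℕ) :
    Multiset.count (σ^[k] x) M = Multiset.count x M := by
  induction k with
  | zero => rfl
  | succ k ih => rw [Function.iterate_succ_apply', count_apply hσ hM, ih]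

lemma map_eq_self_of_count [DecidableEq X] (hσ : Function.Bijective σ) {M : Multiset X}
    (hc : ∀ x, Multiset.count (σ x) M = Multiset.count x M) : Multiset.map σ M = M := by
  ext y
  obtain ⟨x, rfl⟩ := hσ.surjective y
  rw [Multiset.count_map_eq_count' σ M hσ.injective x, hc x]

lemma iterate_mem {M : Multiset X} (hM : Multiset.map σ M = M) {x : X} (hx : x ∈ M) (k : ℕ) :
    σ^[k] x ∈ M := by
  induction k with
  | zero => exact hx
  | succ k ih =>
    rw [Function.iterate_succ_apply']
    rw [← hM]
    exact Multiset.mem_map_of_mem σ ih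

lemma exists_period (hσ : Function.Injective σ) {T : Finset X} {x : X}
    (hmaps : ∀ k, σ^[k] x ∈ T) : x ∈ periodicPts σ ∧ minimalPeriod σ x ≤ T.card := by
  obtain ⟨i, hi, j, hj, hij, heq⟩ := Finset.exists_ne_map_eq_of_card_lt_of_maps_to
    (s := Finset.range (T.card + 1)) (by simp) (fun k _ => hmaps k)
  wlog hlt : i < j generalizing i j
  · exact this j hj i hi hij.symm heq.symm (by omega)
  have hd : σ^[j - i] x = x := by
    have : σ^[i] (σ^[j-i] x) = σ^[i] x := by
      rw [← Function.iterate_add_apply]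
      rw [show i + (j - i) = j by omega, heq]
    exact (hσ.iterate i) this
  have hper : IsPeriodicPt σ (j - i) x := hd
  have hpos : 0 < j - i := by omega
  have hmem : x ∈ periodicPts σ := ⟨j - i, hpos, hper⟩
  refine ⟨hmem, le_trans (hper.minimalPeriod_le hpos) ?_⟩
  simp only [Finset.mem_range] at hj
  omega

lemma fix_factorial (hσ : Function.Injective σ) {T : Finset X} {x : X} {n : ℕ}
    (hmaps : ∀ k, σ^[k] x ∈ T) (hcard : T.card ≤ n) : σ^[n.factorial] x = x := by
  obtain ⟨hmem, hle⟩ := exists_period hσ hmaps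
  have hpos : 0 < minimalPeriod σ x := minimalPeriod_pos_iff_mem_periodicPts.2 hmem
  exact (isPeriodicPt_minimalPeriod σ x).trans_dvd (Nat.dvd_factorial hpos (le_trans hle hcard))

end ZetaAux

namespace ZetaAux2
open ZetaAux

variable {X : Type*} {σ : X → X}

lemma finite_MU (hσ : Function.Bijective σ)
    (hfin : ∀ r : ℕ, 1 ≤ r → {x : X | σ^[r] x = x}.Finite) (n : ℕ) :
    {M : Multiset X | Multiset.card M = n ∧ Multiset.map σ M = M}.Finite := by
  classical
  have hF : {x : X | σ^[n.factorial] x = x}.Finite := hfin _ n.factorial_pos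
  set F : Finset X := hF.toFinset with hFdef
  apply Set.Finite.subset (Set.finite_coe_iff.mp ?_ : _) (s := ↑((n • F.val).powerset.toFinset))
  · intro M hM
    obtain ⟨hcard, hinv⟩ := hM
    simp only [Finset.coe_sort_coe, Multiset.mem_toFinset, Multiset.mem_powerset,
      Finset.mem_coe]
    rw [Multiset.le_iff_count]
    intro x
    by_cases hx : x ∈ M
    · have hxF : x ∈ F := by
        rw [hFdef, Set.Finite.mem_toFinset]
        exact fix_factorial hσ.injective (T := M.toFinset)
          (fun k => Multiset.mem_toFinset.2 (iterate_mem hinv hx k))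
          (le_trans (Multiset.toFinset_card_le M) (le_of_eq hcard))
      rw [Multiset.count_nsmul, Multiset.count_eq_one_of_mem F.nodup hxF]
      calc Multiset.count x M ≤ Multiset.card M := Multiset.count_le_card x M
        _ = n * 1 := by omega
    · simp [Multiset.count_eq_zero_of_notMem hx]
  · exact Set.finite_coe_iff.mpr (Finset.finite_toSet _)

lemma finite_SS (hσ : Function.Bijective σ)
    (hfin : ∀ r : ℕ, 1 ≤ r → {x : X | σ^[r] x = x}.Finite) (n : ℕ) :
    {S : Set X | S.Finite ∧ S.ncard = n ∧ σ '' S = S}.Finite := by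
  have hF : {x : X | σ^[n.factorial] x = x}.Finite := hfin _ n.factorial_pos
  apply Set.Finite.subset hF.finite_subsets
  rintro S ⟨hSfin, hScard, hSinv⟩
  intro x hx
  have hiter : ∀ k, σ^[k] x ∈ hSfin.toFinset := by
    intro k
    rw [Set.Finite.mem_toFinset]
    induction k with
    | zero => exact hx
    | succ k ih =>
      rw [Function.iterate_succ_apply', ← hSinv]
      exact ⟨_, ih, rfl⟩
  exact fix_factorial hσ.injective hiter
    (le_of_eq (by rw [← hScard, Set.ncard_eq_toFinset_card _ hSfin]))

/-- orbit of a periodic point as a multiset -/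
noncomputable def orb (σ : X → X) (x : X) : Multiset X :=
  ↑((List.range (minimalPeriod σ x)).map (fun k => σ^[k] x))

lemma card_orb (σ : X → X) (x : X) : Multiset.card (orb σ x) = minimalPeriod σ x := by
  simp [orb]

lemma mem_orb_iff {x y : X} :
    y ∈ orb σ x ↔ ∃ k < minimalPeriod σ x, σ^[k] x = y := by
  simp [orb, eq_comm]

lemma nodup_orb (σ : X → X) (x : X) : (orb σ x).Nodup := by
  rw [orb, Multiset.coe_nodup]
  apply List.Nodup.map_on _ (List.nodup_range)
  intro i hi j hj hij
  exact iterate_injOn_Iio_minimalPeriod (by simpa using hi) (by simpa using hj) hij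

lemma mem_orb_self {x : X} (hx : x ∈ periodicPts σ) : x ∈ orb σ x :=
  mem_orb_iff.2 ⟨0, minimalPeriod_pos_iff_mem_periodicPts.2 hx, rfl⟩

lemma map_orb (hσ : Function.Injective σ) {x : X} (hx : x ∈ periodicPts σ) :
    Multiset.map σ (orb σ x) = orb σ x := by
  classical
  have hpos : 0 < minimalPeriod σ x := minimalPeriod_pos_iff_mem_periodicPts.2 hx
  have hnodup : (Multiset.map σ (orb σ x)).Nodup := (nodup_orb σ x).map hσ
  rw [Multiset.Nodup.ext hnodup (nodup_orb σ x)]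
  intro y
  simp only [Multiset.mem_map, mem_orb_iff]
  constructor
  · rintro ⟨z, ⟨k, hk, rfl⟩, rfl⟩
    by_cases h : k + 1 = minimalPeriod σ x
    · refine ⟨0, hpos, ?_⟩
      have h1 : σ^[k+1] x = x := by rw [h]; exact iterate_minimalPeriod
      simpa [Function.iterate_succ_apply'] using h1.symm
    · exact ⟨k+1, by omega, Function.iterate_succ_apply' σ k x⟩
  · rintro ⟨k, hk, rfl⟩
    rcases Nat.eq_zero_or_pos k with rfl | hkpos
    · refine ⟨σ^[minimalPeriod σ x - 1] x, ⟨_, by omega, rfl⟩, ?_⟩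
      have h1 : σ^[minimalPeriod σ x - 1 + 1] x = x := by
        rw [Nat.sub_add_cancel hpos]; exact iterate_minimalPeriod
      simpa [Function.iterate_succ_apply'] using h1
    · refine ⟨σ^[k-1] x, ⟨k-1, by omega, rfl⟩, ?_⟩
      have h1 : σ^[k-1+1] x = σ^[k] x := by rw [Nat.sub_add_cancel hkpos]
      simpa [Function.iterate_succ_apply'] using h1

lemma count_orb_of_mem [DecidableEq X] {x y : X} (hy : y ∈ orb σ x) :
    Multiset.count y (orb σ x) = 1 :=
  Multiset.count_eq_one_of_mem (nodup_orb σ x) hy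

lemma count_orb_of_not_mem [DecidableEq X] {x y : X} (hy : y ∉ orb σ x) :
    Multiset.count y (orb σ x) = 0 :=
  Multiset.count_eq_zero_of_notMem hy

end ZetaAux2

namespace ZetaAux3
open ZetaAux ZetaAux2

variable {X : Type*} {σ : X → X}

lemma smul_orb_le [DecidableEq X] (hσ : Function.Injective σ) {M : Multiset X}
    (hM : Multiset.map σ M = M) {x : X} (hx : x ∈ periodicPts σ) {j : ℕ}
    (hj : j ≤ Multiset.count x M) : j • orb σ x ≤ M := by
  rw [Multiset.le_iff_count]
  intro y
  rw [Multiset.count_nsmul]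
  by_cases hy : y ∈ orb σ x
  · obtain ⟨k, _, rfl⟩ := mem_orb_iff.1 hy
    rw [count_orb_of_mem hy, mul_one, count_iterate hσ hM]
    exact hj
  · simp [count_orb_of_not_mem hy]

lemma inv_sub [DecidableEq X] (hσ : Function.Injective σ) {M t : Multiset X} (hM : Multiset.map σ M = M)
    (ht : Multiset.map σ t = t) (hle : t ≤ M) :
    Multiset.map σ (M - t) = M - t := by
  have h1 : (M - t) + t = M := tsub_add_cancel_of_le hle
  have h2 : Multiset.map σ (M - t) + Multiset.map σ t = M := by
    rw [← Multiset.map_add, h1, hM]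
  rw [ht] at h2
  have := h2.trans h1.symm
  exact add_right_cancel this

lemma key1 (hσ : Function.Bijective σ)
    (hfin : ∀ r : ℕ, 1 ≤ r → {x : X | σ^[r] x = x}.Finite) (n : ℕ) :
    n * {M : Multiset X | Multiset.card M = n ∧ Multiset.map σ M = M}.ncard =
    ∑ r ∈ Finset.Icc 1 n, {x : X | σ^[r] x = x}.ncard *
      {M : Multiset X | Multiset.card M = n - r ∧ Multiset.map σ M = M}.ncard := by
  classical
  set MUf : ℕ → Finset (Multiset X) := fun k => (finite_MU hσ hfin k).toFinset with hMUf
  have hMUmem : ∀ k (M : Multiset X), M ∈ MUf k ↔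
      Multiset.card M = k ∧ Multiset.map σ M = M := by
    intro k M; rw [hMUf]; simp [Set.Finite.mem_toFinset]
  have hMUcard : ∀ k, (MUf k).card =
      {M : Multiset X | Multiset.card M = k ∧ Multiset.map σ M = M}.ncard := by
    intro k; rw [Set.ncard_eq_toFinset_card _ (finite_MU hσ hfin k)]
  set Fxf : ℕ → Finset X := fun r => if h : 1 ≤ r then (hfin r h).toFinset else ∅ with hFxf
  have hFxmem : ∀ r, 1 ≤ r → ∀ x : X, (x ∈ Fxf r ↔ σ^[r] x = x) := by
    intro r hr x; rw [hFxf]; simp only [dif_pos hr, Set.Finite.mem_toFinset]; rfl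
  have hFxcard : ∀ r, 1 ≤ r → (Fxf r).card = {x : X | σ^[r] x = x}.ncard := by
    intro r hr; rw [hFxf]; simp only [dif_pos hr]
    rw [Set.ncard_eq_toFinset_card _ (hfin r hr)]
  set s : Finset ((_ : Multiset X) × X × ℕ) :=
    (MUf n).sigma (fun M => M.toFinset.biUnion
      (fun x => {x} ×ˢ Finset.Icc 1 (Multiset.count x M))) with hs
  set t : Finset ((_ : ℕ) × X × Multiset X) :=
    (Finset.Icc 1 n).sigma (fun r => Fxf r ×ˢ MUf (n - r)) with ht
  have hsmem : ∀ (M : Multiset X) (x : X) (j : ℕ),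
      (⟨M, (x, j)⟩ : (_ : Multiset X) × X × ℕ) ∈ s ↔
      (Multiset.card M = n ∧ Multiset.map σ M = M) ∧
      1 ≤ j ∧ j ≤ Multiset.count x M := by
    intro M x j
    rw [hs]
    simp only [Finset.mem_sigma, Finset.mem_biUnion, Finset.mem_product, Finset.mem_singleton,
      Finset.mem_Icc, Multiset.mem_toFinset, hMUmem]
    constructor
    · rintro ⟨h1, z, hz, rfl, h3, h4⟩; exact ⟨h1, h3, h4⟩
    · rintro ⟨h1, h3, h4⟩
      exact ⟨h1, x, Multiset.count_pos.1 (le_trans h3 h4), rfl, h3, h4⟩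
  have htmem : ∀ (r : ℕ) (x : X) (M' : Multiset X),
      (⟨r, (x, M')⟩ : (_ : ℕ) × X × Multiset X) ∈ t ↔
      (1 ≤ r ∧ r ≤ n) ∧ σ^[r] x = x ∧
      (Multiset.card M' = n - r ∧ Multiset.map σ M' = M') := by
    intro r x M'
    rw [ht]
    simp only [Finset.mem_sigma, Finset.mem_product, Finset.mem_Icc, hMUmem]
    constructor
    · rintro ⟨⟨h1, h2⟩, h3, h4⟩
      exact ⟨⟨h1, h2⟩, (hFxmem r h1 x).1 h3, h4⟩
    · rintro ⟨⟨h1, h2⟩, h3, h4⟩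
      exact ⟨⟨h1, h2⟩, (hFxmem r h1 x).2 h3, h4⟩
  -- cardinality of s
  have hscard : s.card = (MUf n).card * n := by
    rw [hs, Finset.card_sigma]
    rw [Finset.sum_congr rfl (g := fun _ => n) ?_, Finset.sum_const, smul_eq_mul]
    intro M hM
    rw [Finset.card_biUnion]
    · rw [Finset.sum_congr rfl (g := fun x => Multiset.count x M) ?_]
      · rw [Multiset.toFinset_sum_count_eq]
        exact ((hMUmem n M).1 hM).1
      · intro x _
        simp [Nat.card_Icc]
    · intro x _ y _ hxy
      rw [Function.onFun, Finset.disjoint_left]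
      rintro ⟨px, pj⟩ hp hq
      simp only [Finset.mem_product, Finset.mem_singleton] at hp hq
      exact hxy (hp.1.symm.trans hq.1)
  -- cardinality of t
  have htcard : t.card = ∑ r ∈ Finset.Icc 1 n, {x : X | σ^[r] x = x}.ncard *
      {M : Multiset X | Multiset.card M = n - r ∧ Multiset.map σ M = M}.ncard := by
    rw [ht, Finset.card_sigma]
    apply Finset.sum_congr rfl
    intro r hr
    rw [Finset.card_product, hFxcard r (Finset.mem_Icc.1 hr).1, hMUcard]
  rw [← hMUcard, ← htcard, mul_comm n, ← hscard]
  -- the bijection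
  apply Finset.card_nbij'
    (i := fun a => ⟨a.2.2 * minimalPeriod σ a.2.1, (a.2.1, a.1 - a.2.2 • orb σ a.2.1)⟩)
    (j := fun b => ⟨b.2.2 + (b.1 / minimalPeriod σ b.2.1) • orb σ b.2.1,
      (b.2.1, b.1 / minimalPeriod σ b.2.1)⟩)
  · rintro ⟨M, x, j⟩ ha
    obtain ⟨⟨hcard, hinv⟩, hj1, hj2⟩ := (hsmem M x j).1 ha
    have hxM : x ∈ M := by rw [← Multiset.count_pos]; omega
    have hper : x ∈ periodicPts σ := (exists_period hσ.injective (T := M.toFinset)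
      (fun k => Multiset.mem_toFinset.2 (iterate_mem hinv hxM k))).1
    have hdpos : 0 < minimalPeriod σ x := minimalPeriod_pos_iff_mem_periodicPts.2 hper
    have hle : j • orb σ x ≤ M := smul_orb_le hσ.injective hinv hper hj2
    have hcardle : j * minimalPeriod σ x ≤ n := by
      have := Multiset.card_le_card hle
      rwa [Multiset.card_nsmul, card_orb, hcard] at this
    dsimp only
    rw [Finset.mem_coe, htmem]
    refine ⟨⟨Nat.mul_pos (by omega) hdpos, hcardle⟩, ?_, ?_, ?_⟩
    · exact (isPeriodicPt_minimalPeriod σ x).trans_dvd (dvd_mul_left _ _)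
    · rw [Multiset.card_sub hle, Multiset.card_nsmul, card_orb, hcard]
    · exact inv_sub hσ.injective hinv
        (by rw [Multiset.map_nsmul, map_orb hσ.injective hper]) hle
  · rintro ⟨r, x, M'⟩ hb
    obtain ⟨⟨hr1, hr2⟩, hfix, hcard, hinv⟩ := (htmem r x M').1 hb
    have hper : x ∈ periodicPts σ := ⟨r, hr1, hfix⟩
    have hdpos : 0 < minimalPeriod σ x := minimalPeriod_pos_iff_mem_periodicPts.2 hper
    have hdvd : minimalPeriod σ x ∣ r := Function.IsPeriodicPt.minimalPeriod_dvd hfix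
    have hjpos : 0 < r / minimalPeriod σ x := Nat.div_pos (Nat.le_of_dvd hr1 hdvd) hdpos
    dsimp only
    rw [Finset.mem_coe, hsmem]
    have horbinv : Multiset.map σ ((r / minimalPeriod σ x) • orb σ x) =
        (r / minimalPeriod σ x) • orb σ x := by
      rw [Multiset.map_nsmul, map_orb hσ.injective hper]
    refine ⟨⟨?_, ?_⟩, hjpos, ?_⟩
    · rw [Multiset.card_add, Multiset.card_nsmul, card_orb, hcard,
        Nat.div_mul_cancel hdvd]
      omega
    · rw [Multiset.map_add, hinv, horbinv]
    · rw [Multiset.count_add, Multiset.count_nsmul,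
        count_orb_of_mem (mem_orb_self hper), mul_one]
      omega
  · rintro ⟨M, x, j⟩ ha
    obtain ⟨⟨hcard, hinv⟩, hj1, hj2⟩ := (hsmem M x j).1 ha
    have hxM : x ∈ M := by rw [← Multiset.count_pos]; omega
    have hper : x ∈ periodicPts σ := (exists_period hσ.injective (T := M.toFinset)
      (fun k => Multiset.mem_toFinset.2 (iterate_mem hinv hxM k))).1
    have hdpos : 0 < minimalPeriod σ x := minimalPeriod_pos_iff_mem_periodicPts.2 hper
    have hle : j • orb σ x ≤ M := smul_orb_le hσ.injective hinv hper hj2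
    dsimp only
    rw [Nat.mul_div_cancel j hdpos, tsub_add_cancel_of_le hle]
  · rintro ⟨r, x, M'⟩ hb
    obtain ⟨⟨hr1, hr2⟩, hfix, hcard, hinv⟩ := (htmem r x M').1 hb
    have hper : x ∈ periodicPts σ := ⟨r, hr1, hfix⟩
    have hdvd : minimalPeriod σ x ∣ r := Function.IsPeriodicPt.minimalPeriod_dvd hfix
    dsimp only
    rw [Nat.div_mul_cancel hdvd, add_tsub_cancel_right]

end ZetaAux3

namespace ZetaAux4
open ZetaAux ZetaAux2 ZetaAux3

variable {X : Type*} {σ : X → X}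

/-- the "half" of a multiset: multiplicities divided by 2 (rounded down) -/
noncomputable def half [DecidableEq X] (M : Multiset X) : Multiset X :=
  ((Multiset.toFinsupp M).mapRange (· / 2) (by simp)).toMultiset

lemma count_half [DecidableEq X] (M : Multiset X) (x : X) :
    Multiset.count x (half M) = Multiset.count x M / 2 := by
  simp [half, Finsupp.count_toMultiset, Finsupp.mapRange_apply]

lemma card_decomp [DecidableEq X] (M : Multiset X) :
    Multiset.card M = 2 * Multiset.card (half M) + {x | Odd (Multiset.count x M)}.ncard := by
  have hsub : (half M).toFinset ⊆ M.toFinset := by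
    intro x hx
    rw [Multiset.mem_toFinset, ← Multiset.count_pos] at hx ⊢
    rw [count_half] at hx
    omega
  have hhalfcard : Multiset.card (half M) = ∑ x ∈ M.toFinset, Multiset.count x (half M) := by
    rw [← Multiset.toFinset_sum_count_eq (half M)]
    exact Finset.sum_subset hsub (fun x _ hx =>
      Multiset.count_eq_zero_of_notMem (fun h => hx (Multiset.mem_toFinset.2 h)))
  have hSodd : {x | Odd (Multiset.count x M)} =
      ↑(M.toFinset.filter (fun x => Odd (Multiset.count x M))) := by
    ext x
    simp only [Set.mem_setOf_eq, Finset.coe_filter, Multiset.mem_toFinset]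
    constructor
    · intro h
      refine ⟨?_, h⟩
      rw [← Multiset.count_pos]
      rw [Nat.odd_iff] at h
      omega
    · exact fun h => h.2
  rw [hSodd, Set.ncard_coe_finset]
  calc Multiset.card M = ∑ x ∈ M.toFinset, Multiset.count x M :=
        (Multiset.toFinset_sum_count_eq M).symm
    _ = ∑ x ∈ M.toFinset, (2 * Multiset.count x (half M)
          + if Odd (Multiset.count x M) then 1 else 0) := by
        apply Finset.sum_congr rfl
        intro x _
        rw [count_half]
        split_ifs with h
        · rw [Nat.odd_iff] at h; omega
        · rw [Nat.odd_iff] at h; omega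
    _ = 2 * Multiset.card (half M)
          + (M.toFinset.filter (fun x => Odd (Multiset.count x M))).card := by
        rw [Finset.sum_add_distrib, ← Finset.mul_sum, ← hhalfcard, Finset.card_filter]

lemma key2 (hσ : Function.Bijective σ)
    (hfin : ∀ r : ℕ, 1 ≤ r → {x : X | σ^[r] x = x}.Finite) (n : ℕ) :
    {M : Multiset X | Multiset.card M = n ∧ Multiset.map σ M = M}.ncard =
    ∑ j ∈ Finset.range (n+1), if 2 ∣ j then
      {S : Set X | S.Finite ∧ S.ncard = n - j ∧ σ '' S = S}.ncard *
      {M : Multiset X | Multiset.card M = j/2 ∧ Multiset.map σ M = M}.ncard else 0 := by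
  classical
  set MUf : ℕ → Finset (Multiset X) := fun k => (finite_MU hσ hfin k).toFinset with hMUf
  have hMUmem : ∀ k (M : Multiset X), M ∈ MUf k ↔
      Multiset.card M = k ∧ Multiset.map σ M = M := by
    intro k M; rw [hMUf]; simp [Set.Finite.mem_toFinset]
  have hMUcard : ∀ k, (MUf k).card =
      {M : Multiset X | Multiset.card M = k ∧ Multiset.map σ M = M}.ncard := by
    intro k; rw [Set.ncard_eq_toFinset_card _ (finite_MU hσ hfin k)]
  set SSf : ℕ → Finset (Set X) := fun k => (finite_SS hσ hfin k).toFinset with hSSf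
  have hSSmem : ∀ k (S : Set X), S ∈ SSf k ↔ (S.Finite ∧ S.ncard = k ∧ σ '' S = S) := by
    intro k S; rw [hSSf]; simp [Set.Finite.mem_toFinset]
  have hSScard : ∀ k, (SSf k).card =
      {S : Set X | S.Finite ∧ S.ncard = k ∧ σ '' S = S}.ncard := by
    intro k; rw [Set.ncard_eq_toFinset_card _ (finite_SS hσ hfin k)]
  set t : Finset ((_ : ℕ) × Set X × Multiset X) :=
    (Finset.range (n+1)).sigma (fun j => if 2 ∣ j then SSf (n - j) ×ˢ MUf (j / 2) else ∅)
    with ht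
  have htmem : ∀ (j : ℕ) (S : Set X) (M' : Multiset X),
      (⟨j, (S, M')⟩ : (_ : ℕ) × Set X × Multiset X) ∈ t ↔
      j < n + 1 ∧ 2 ∣ j ∧ (S.Finite ∧ S.ncard = n - j ∧ σ '' S = S) ∧
        (Multiset.card M' = j / 2 ∧ Multiset.map σ M' = M') := by
    intro j S M'
    rw [ht]
    simp only [Finset.mem_sigma, Finset.mem_range]
    constructor
    · rintro ⟨h1, h2⟩
      split_ifs at h2 with hdvd
      · rw [Finset.mem_product, hSSmem, hMUmem] at h2
        exact ⟨h1, hdvd, h2.1, h2.2⟩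
      · simp at h2
    · rintro ⟨h1, hdvd, h3, h4⟩
      refine ⟨h1, ?_⟩
      rw [if_pos hdvd, Finset.mem_product, hSSmem, hMUmem]
      exact ⟨h3, h4⟩
  have htcard : t.card = ∑ j ∈ Finset.range (n+1), if 2 ∣ j then
      {S : Set X | S.Finite ∧ S.ncard = n - j ∧ σ '' S = S}.ncard *
      {M : Multiset X | Multiset.card M = j/2 ∧ Multiset.map σ M = M}.ncard else 0 := by
    rw [ht, Finset.card_sigma]
    apply Finset.sum_congr rfl
    intro j _
    split_ifs with hdvd
    · rw [Finset.card_product, hSScard, hMUcard]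
    · simp
  rw [← hMUcard, ← htcard]
  apply Finset.card_nbij'
    (i := fun M => ⟨2 * Multiset.card (half M), ({x | Odd (Multiset.count x M)}, half M)⟩)
    (j := fun b => (if h : b.2.1.Finite then h.toFinset.val else 0) + 2 • b.2.2)
  · intro M hM
    obtain ⟨hcard, hinv⟩ := (hMUmem n M).1 hM
    have hdec := card_decomp M
    have hSfin : {x | Odd (Multiset.count x M)}.Finite := by
      apply Set.Finite.subset (Finset.finite_toSet M.toFinset)
      intro x hx
      simp only [Set.mem_setOf_eq, Nat.odd_iff] at hx
      rw [Finset.mem_coe, Multiset.mem_toFinset, ← Multiset.count_pos]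
      omega
    try dsimp only
    rw [Finset.mem_coe, htmem]
    refine ⟨by omega, ⟨_, rfl⟩, ⟨hSfin, by omega, ?_⟩, ?_, ?_⟩
    · -- invariance of odd set
      ext y
      simp only [Set.mem_image, Set.mem_setOf_eq]
      constructor
      · rintro ⟨x, hx, rfl⟩
        rwa [count_apply hσ.injective hinv]
      · intro hy
        obtain ⟨x, rfl⟩ := hσ.surjective y
        rw [count_apply hσ.injective hinv] at hy
        exact ⟨x, hy, rfl⟩
    · rw [Nat.mul_div_cancel_left _ (by norm_num : 0 < 2)]
    · apply map_eq_self_of_count hσ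
      intro x
      rw [count_half, count_half, count_apply hσ.injective hinv]
  · rintro ⟨j, S, M'⟩ hb
    obtain ⟨hj, hdvd, ⟨hSfin, hScard, hSinv⟩, hM'card, hM'inv⟩ := (htmem j S M').1 hb
    try dsimp only
    rw [dif_pos hSfin, Finset.mem_coe, hMUmem]
    have hcount : ∀ x, Multiset.count x hSfin.toFinset.val =
        if x ∈ S then 1 else 0 := by
      intro x
      split_ifs with hx
      · exact Multiset.count_eq_one_of_mem hSfin.toFinset.nodup
          (by rwa [Finset.mem_val, Set.Finite.mem_toFinset])
      · exact Multiset.count_eq_zero_of_notMem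
          (by rwa [Finset.mem_val, Set.Finite.mem_toFinset])
    have hmem_iff : ∀ x, σ x ∈ S ↔ x ∈ S := by
      intro x
      conv_rhs => rw [← hσ.injective.mem_set_image (s := S)]
      rw [hSinv]
    constructor
    · rw [Multiset.card_add, Multiset.card_nsmul, ← Finset.card_def,
        ← Set.ncard_eq_toFinset_card _ hSfin, hScard, hM'card]
      omega
    · apply map_eq_self_of_count hσ
      intro x
      rw [Multiset.count_add, Multiset.count_add, Multiset.count_nsmul, Multiset.count_nsmul,
        hcount, hcount, count_apply hσ.injective hM'inv]
      congr 1
      simp only [hmem_iff]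
  · intro M hM
    obtain ⟨hcard, hinv⟩ := (hMUmem n M).1 hM
    have hSfin : {x | Odd (Multiset.count x M)}.Finite := by
      apply Set.Finite.subset (Finset.finite_toSet M.toFinset)
      intro x hx
      simp only [Set.mem_setOf_eq, Nat.odd_iff] at hx
      rw [Finset.mem_coe, Multiset.mem_toFinset, ← Multiset.count_pos]
      omega
    try dsimp only
    rw [dif_pos hSfin]
    ext x
    rw [Multiset.count_add, Multiset.count_nsmul, count_half]
    have hc : Multiset.count x hSfin.toFinset.val =
        if Odd (Multiset.count x M) then 1 else 0 := by
      split_ifs with hx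
      · exact Multiset.count_eq_one_of_mem hSfin.toFinset.nodup
          (by rw [Finset.mem_val, Set.Finite.mem_toFinset]; exact hx)
      · exact Multiset.count_eq_zero_of_notMem
          (by rw [Finset.mem_val, Set.Finite.mem_toFinset]; exact hx)
    rw [hc]
    split_ifs with h <;> rw [Nat.odd_iff] at h <;> omega
  · rintro ⟨j, S, M'⟩ hb
    obtain ⟨hj, hdvd, ⟨hSfin, hScard, hSinv⟩, hM'card, hM'inv⟩ := (htmem j S M').1 hb
    try dsimp only
    rw [dif_pos hSfin]
    have hcount : ∀ x, Multiset.count x hSfin.toFinset.val =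
        if x ∈ S then 1 else 0 := by
      intro x
      split_ifs with hx
      · exact Multiset.count_eq_one_of_mem hSfin.toFinset.nodup
          (by rwa [Finset.mem_val, Set.Finite.mem_toFinset])
      · exact Multiset.count_eq_zero_of_notMem
          (by rwa [Finset.mem_val, Set.Finite.mem_toFinset])
    have hhalf : half (hSfin.toFinset.val + 2 • M') = M' := by
      ext x
      rw [count_half, Multiset.count_add, Multiset.count_nsmul, hcount]
      split_ifs <;> omega
    have hSodd : {x | Odd (Multiset.count x (hSfin.toFinset.val + 2 • M'))} = S := by
      ext x
      simp only [Set.mem_setOf_eq, Multiset.count_add, Multiset.count_nsmul, hcount,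
        Nat.odd_iff]
      split_ifs with hx <;> simp [hx] <;> omega
    rw [hhalf, hSodd, hM'card]
    have h2 : 2 * (j / 2) = j := by omega
    rw [h2]
end ZetaAux4

namespace ZetaAux5
open PowerSeries

lemma coeff_pow_zero (f : PowerSeries ℚ) (hf : constantCoeff f = 0) {n m : ℕ} (h : n < m) :
    coeff n (f ^ m) = 0 := by
  have hdvd : (X : ℚ⟦X⟧) ^ m ∣ f ^ m := pow_dvd_pow_of_dvd (X_dvd_iff.2 hf) m
  exact X_pow_dvd_iff.1 hdvd n h

lemma coeff_expPS (f : PowerSeries ℚ) (hf : constantCoeff f = 0) {n K : ℕ} (hK : n < K) :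
    coeff n (expPS f) = ∑ m ∈ Finset.range K, coeff n (f ^ m) / m.factorial := by
  rw [expPS, coeff_mk]
  apply Finset.sum_subset (Finset.range_subset_range.2 hK)
  intro m _ hm
  rw [Finset.mem_range, not_lt] at hm
  rw [coeff_pow_zero f hf (by omega), zero_div]

lemma coeff_expPS_zero (f : PowerSeries ℚ) : coeff 0 (expPS f) = 1 := by
  rw [expPS, coeff_mk, Finset.sum_range_one]
  simp

lemma derivative_expPS (f : PowerSeries ℚ) (hf : constantCoeff f = 0) :
    d⁄dX ℚ (expPS f) = (d⁄dX ℚ f) * expPS f := by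
  ext n
  rw [coeff_derivative, coeff_expPS f hf (by omega : n + 1 < n + 2), Finset.sum_mul]
  have hstep : ∀ m : ℕ, coeff (n+1) (f ^ m) / m.factorial * (n+1) =
      (m : ℚ) * coeff n (f ^ (m-1) * d⁄dX ℚ f) / m.factorial := by
    intro m
    have h1 : coeff (n+1) (f ^ m) * ((n:ℚ)+1) =
        (m : ℚ) * coeff n (f ^ (m-1) * d⁄dX ℚ f) := by
      rw [← coeff_derivative (f ^ m) n, Derivation.leibniz_pow, _root_.map_nsmul, nsmul_eq_mul,
        smul_eq_mul]
    rw [div_mul_eq_mul_div, h1]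
  rw [Finset.sum_congr rfl (fun m _ => hstep m)]
  rw [Finset.sum_range_succ']
  simp only [Nat.cast_zero, zero_mul, zero_div, add_zero]
  have hleft : ∀ k : ℕ, ((k+1 : ℕ) : ℚ) * coeff n (f ^ ((k+1)-1) * d⁄dX ℚ f) /
      (k+1).factorial = coeff n (f ^ k * d⁄dX ℚ f) / k.factorial := by
    intro k
    rw [Nat.add_sub_cancel, Nat.factorial_succ, Nat.cast_mul, Nat.cast_add, Nat.cast_one]
    have h1 : ((k:ℚ)+1) ≠ 0 := by positivity
    have h2 : ((k.factorial : ℚ)) ≠ 0 := Nat.cast_ne_zero.2 k.factorial_ne_zero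
    field_simp
  rw [Finset.sum_congr rfl (fun k _ => hleft k)]
  -- now the right-hand side
  rw [coeff_mul]
  have hrhs : ∀ p ∈ Finset.HasAntidiagonal.antidiagonal n,
      coeff p.1 (d⁄dX ℚ f) * coeff p.2 (expPS f) =
      ∑ m ∈ Finset.range (n+1), coeff p.1 (d⁄dX ℚ f) * coeff p.2 (f ^ m) / m.factorial := by
    intro p hp
    have hle : p.2 ≤ n := Finset.HasAntidiagonal.antidiagonal.snd_le hp
    rw [coeff_expPS f hf (by omega : p.2 < n + 1), Finset.mul_sum]
    apply Finset.sum_congr rfl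
    intro m _
    rw [mul_div_assoc]
  rw [Finset.sum_congr rfl hrhs, Finset.sum_comm]
  apply Finset.sum_congr rfl
  intro m _
  rw [← Finset.sum_div]
  congr 1
  rw [mul_comm (f ^ m), coeff_mul]

lemma ode_unique (g E B : PowerSeries ℚ) (h0 : coeff 0 E = coeff 0 B)
    (hE : d⁄dX ℚ E = g * E) (hB : d⁄dX ℚ B = g * B) : E = B := by
  ext n
  induction n using Nat.strong_induction_on with
  | _ n ih =>
    match n with
    | 0 => exact h0
    | Nat.succ n =>
      have hE' := congrArg (coeff n) hE
      have hB' := congrArg (coeff n) hB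
      rw [coeff_derivative, coeff_mul] at hE' hB'
      have hsum : ∑ p ∈ Finset.HasAntidiagonal.antidiagonal n, coeff p.1 g * coeff p.2 E =
          ∑ p ∈ Finset.HasAntidiagonal.antidiagonal n, coeff p.1 g * coeff p.2 B := by
        apply Finset.sum_congr rfl
        intro p hp
        rw [ih p.2 (by have := Finset.HasAntidiagonal.antidiagonal.snd_le hp; omega)]
      have : coeff (n+1) E * (n+1) = coeff (n+1) B * (n+1) := by
        rw [hE', hB', hsum]
      exact mul_right_cancel₀ (by positivity : ((n:ℚ)+1) ≠ 0) this

end ZetaAux5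

open PowerSeries in
theorem ZetaFinal_main (X : Type*) (σ : X → X) (hσ : Function.Bijective σ)
    (Nr : ℕ → ℕ)
    (hfin : ∀ r : ℕ, 1 ≤ r → {x : X | σ^[r] x = x}.Finite)
    (hNr : ∀ r : ℕ, 1 ≤ r → {x : X | σ^[r] x = x}.ncard = Nr r)
    (a abar : ℕ → ℕ)
    (ha : ∀ n, a n = Set.ncard {S : Set X | S.Finite ∧ S.ncard = n ∧ σ '' S = S})
    (habar : ∀ n, abar n =
      Set.ncard {M : Multiset X | Multiset.card M = n ∧ Multiset.map σ M = M})
    (Z : PowerSeries ℚ)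
    (hZ : Z = expPS (PowerSeries.mk fun r => if r = 0 then 0 else (Nr r : ℚ) / r)) :
    (PowerSeries.mk fun n => (a n : ℚ)) * substSq Z = Z ∧
    (PowerSeries.mk fun n => (abar n : ℚ)) = Z := by
  classical
  set f : ℚ⟦X⟧ := PowerSeries.mk fun r => if r = 0 then 0 else (Nr r : ℚ) / r with hfdef
  have hf0 : constantCoeff f = 0 := by
    rw [hfdef, constantCoeff_mk]
    simp
  have habar0 : abar 0 = 1 := by
    rw [habar]
    have h1 : {M : Multiset X | Multiset.card M = 0 ∧ Multiset.map σ M = M} = {0} := by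
      ext M
      simp [Multiset.card_eq_zero]
      intro h
      subst h
      rfl
    rw [h1, Set.ncard_singleton]
  set B : ℚ⟦X⟧ := PowerSeries.mk fun n => (abar n : ℚ) with hBdef
  -- the ℕ-valued recursion from key1
  have hkey1 : ∀ n : ℕ, (n+1) * abar (n+1) = ∑ k ∈ Finset.range (n+1),
      Nr (k+1) * abar (n - k) := by
    intro n
    have h1 := ZetaAux3.key1 hσ hfin (n+1)
    rw [← habar] at h1
    have h2 : ∑ r ∈ Finset.Icc 1 (n+1), {x : X | σ^[r] x = x}.ncard *
        {M : Multiset X | Multiset.card M = (n+1) - r ∧ Multiset.map σ M = M}.ncard =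
        ∑ r ∈ Finset.Icc 1 (n+1), Nr r * abar (n+1-r) := by
      apply Finset.sum_congr rfl
      intro r hr
      rw [hNr r (Finset.mem_Icc.1 hr).1, ← habar]
    rw [h2] at h1
    rw [h1]
    apply Finset.sum_nbij' (i := fun r => r - 1) (j := fun k => k + 1)
    · intro r hr
      rw [Finset.mem_Icc] at hr
      rw [Finset.mem_range]
      omega
    · intro k hk
      rw [Finset.mem_range] at hk
      rw [Finset.mem_Icc]
      omega
    · intro r hr
      rw [Finset.mem_Icc] at hr
      omega
    · intro k _
      omega
    · intro r hr
      rw [Finset.mem_Icc] at hr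
      have e1 : r - 1 + 1 = r := by omega
      have e2 : n - (r - 1) = n + 1 - r := by omega
      rw [e1, e2]
  -- the ℕ-valued identity from key2
  have hkey2 : ∀ n : ℕ, abar n = ∑ k ∈ Finset.range (n+1),
      if 2 ∣ (n - k) then a k * abar ((n - k)/2) else 0 := by
    intro n
    have h1 := ZetaAux4.key2 hσ hfin n
    rw [← habar] at h1
    have h2 : ∑ j ∈ Finset.range (n+1), (if 2 ∣ j then
        {S : Set X | S.Finite ∧ S.ncard = n - j ∧ σ '' S = S}.ncard *
        {M : Multiset X | Multiset.card M = j/2 ∧ Multiset.map σ M = M}.ncard else 0) =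
        ∑ j ∈ Finset.range (n+1), (if 2 ∣ j then a (n-j) * abar (j/2) else 0) := by
      apply Finset.sum_congr rfl
      intro j _
      split_ifs with h
      · rw [← ha, ← habar]
      · rfl
    rw [h2] at h1
    rw [h1, ← Finset.sum_range_reflect]
    apply Finset.sum_congr rfl
    intro k hk
    rw [Finset.mem_range] at hk
    have e1 : n + 1 - 1 - k = n - k := by omega
    rw [e1]
    split_ifs with h
    · have e2 : n - (n - k) = k := by omega
      rw [e2]
    · rfl
  have hBZ : B = Z := by
    apply ZetaAux5.ode_unique (d⁄dX ℚ f) B Z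
    · rw [hBdef, hZ, coeff_mk, habar0, ZetaAux5.coeff_expPS_zero]
      norm_num
    · ext n
      rw [coeff_derivative, PowerSeries.coeff_mul]
      rw [hBdef]
      simp only [coeff_mk]
      have hcoeffd : ∀ i : ℕ, coeff i (d⁄dX ℚ f) = (Nr (i+1) : ℚ) := by
        intro i
        rw [coeff_derivative, hfdef, coeff_mk, if_neg (Nat.succ_ne_zero i)]
        have hne : ((i:ℚ)+1) ≠ 0 := by positivity
        push_cast
        field_simp
      rw [Finset.Nat.sum_antidiagonal_eq_sum_range_succ_mk]
      have hq := hkey1 n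
      have hqQ : ((n:ℚ)+1) * (abar (n+1) : ℚ) = ∑ k ∈ Finset.range (n+1),
          (Nr (k+1) : ℚ) * (abar (n-k) : ℚ) := by
        exact_mod_cast congrArg (Nat.cast : ℕ → ℚ) hq
      rw [mul_comm] at hqQ
      rw [hqQ]
      apply Finset.sum_congr rfl
      intro k _
      rw [hcoeffd]
    · rw [hZ]
      exact ZetaAux5.derivative_expPS f hf0
  refine ⟨?_, hBZ⟩
  rw [← hBZ]
  ext n
  rw [PowerSeries.coeff_mul]
  rw [hBdef]
  simp only [coeff_mk, substSq]
  have hq := hkey2 n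
  have hqQ : (abar n : ℚ) = ∑ k ∈ Finset.range (n+1),
      if 2 ∣ (n - k) then (a k : ℚ) * (abar ((n - k)/2) : ℚ) else 0 := by
    rw [hq]
    push_cast [Finset.sum_ite]
    rfl
  rw [Finset.Nat.sum_antidiagonal_eq_sum_range_succ_mk, hqQ]
  apply Finset.sum_congr rfl
  intro k _
  rw [mul_ite, mul_zero]

/-- Let `X` be a set and `σ : X → X` a bijection such that for every `r ≥ 1`
the fixed-point set of `σ^r` is finite with cardinality `N_r`.  Let `a n` be
the number of `n`-element subsets `S ⊆ X` with `σ(S) = S` and `abar n` the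
number of size-`n` multisets of elements of `X` invariant under `σ`.  With
`Z = exp (∑_{r≥1} N_r x^r / r)`, one has
`(∑ a(n) xⁿ) · Z(x²) = Z(x)` and `∑ ā(n) xⁿ = Z(x)`. -/
theorem stmt0 (X : Type*) (σ : X → X) (hσ : Function.Bijective σ)
    (Nr : ℕ → ℕ)
    (hfin : ∀ r : ℕ, 1 ≤ r → {x : X | σ^[r] x = x}.Finite)
    (hNr : ∀ r : ℕ, 1 ≤ r → {x : X | σ^[r] x = x}.ncard = Nr r)
    (a abar : ℕ → ℕ)
    (ha : ∀ n, a n = Set.ncard {S : Set X | S.Finite ∧ S.ncard = n ∧ σ '' S = S})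
    (habar : ∀ n, abar n =
      Set.ncard {M : Multiset X | Multiset.card M = n ∧ Multiset.map σ M = M})
    (Z : PowerSeries ℚ)
    (hZ : Z = expPS (PowerSeries.mk fun r => if r = 0 then 0 else (Nr r : ℚ) / r)) :
    (PowerSeries.mk fun n => (a n : ℚ)) * substSq Z = Z ∧
    (PowerSeries.mk fun n => (abar n : ℚ)) = Z :=
  ZetaFinal_main X σ hσ Nr hfin hNr a abar ha habar Z hZ
end

section
/- For every N ≥ 1 and every n ≥ 0, the number a(n) of n-element subsets S ⊆ k̄^N with σ(S) = S satisfies: a(n) = q^{nN} if n ≤ 1, and a(n) = q^{nN} − q^{(n−1)N} if n ≥ 2. -/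
/-- The `q`-power Frobenius acting coordinatewise on `k̄^N`,
where `q = |k|`. -/
noncomputable def afFrob (k : Type*) [Field k] [Fintype k] (N : ℕ) :
    (Fin N → AlgebraicClosure k) → (Fin N → AlgebraicClosure k) :=
  fun v i => (v i) ^ (Fintype.card k)

/-- The number of `n`-element subsets `S` of `A ⊆ X` with `σ(S) = S`. -/
noncomputable def nSetCount {X : Type*} (σ : X → X) (A : Set X) (n : ℕ) : ℕ :=
  Set.ncard {S : Set X | S ⊆ A ∧ S.Finite ∧ S.ncard = n ∧ σ '' S = S}

open Function Set Polynomial IntermediateField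

namespace AfCount

noncomputable section

section dynamics

variable {X Y : Type*}

def fixSet (f : X → X) (m : ℕ) : Set X := {x | f^[m] x = x}

def orbSet (f : X → X) (x : X) : Set X := Set.range fun i => f^[i] x

def perSet (f : X → X) (d : ℕ) : Set X := {x | minimalPeriod f x = d}

lemma mem_orbSet_self (f : X → X) (x : X) : x ∈ orbSet f x := ⟨0, rfl⟩

lemma mem_orbSet_iter (f : X → X) (x : X) (i : ℕ) : f^[i] x ∈ orbSet f x := ⟨i, rfl⟩

lemma orbSet_eq_of_mem {f : X → X} {x y : X} (hx : x ∈ periodicPts f) (hy : y ∈ orbSet f x) :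
    orbSet f y = orbSet f x := by
  obtain ⟨i, rfl⟩ := hy
  have hd : 0 < minimalPeriod f x := minimalPeriod_pos_of_mem_periodicPts hx
  set d := minimalPeriod f x with hdd
  ext z; constructor
  · rintro ⟨j, rfl⟩
    show f^[j] (f^[i] x) ∈ _
    rw [← Function.iterate_add_apply]; exact ⟨j + i, rfl⟩
  · rintro ⟨j, rfl⟩
    refine ⟨j + (d - i % d), ?_⟩
    show f^[j + (d - i % d)] (f^[i] x) = f^[j] x
    rw [← Function.iterate_add_apply]
    have h1 : j + (d - i % d) + i = j + (d + d * (i / d)) := by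
      have := Nat.mod_lt i hd
      have := Nat.div_add_mod i d
      omega
    rw [h1, Function.iterate_add_apply]
    congr 1
    have : IsPeriodicPt f (d + d * (i / d)) x :=
      isPeriodicPt_iff_minimalPeriod_dvd.mpr ⟨1 + i / d, by rw [← hdd]; ring⟩
    exact this

lemma minimalPeriod_of_mem_orbSet {f : X → X} {x y : X} (hx : x ∈ periodicPts f)
    (hy : y ∈ orbSet f x) : minimalPeriod f y = minimalPeriod f x := by
  obtain ⟨i, rfl⟩ := hy
  exact minimalPeriod_apply_iterate hx i

open scoped Classical in
lemma orbSet_eq_image {f : X → X} {x : X} (hx : x ∈ periodicPts f) :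
    orbSet f x = ↑((Finset.range (minimalPeriod f x)).image (fun i => f^[i] x)) := by
  have hd : 0 < minimalPeriod f x := minimalPeriod_pos_of_mem_periodicPts hx
  ext z; constructor
  · rintro ⟨i, rfl⟩
    simp only [Finset.coe_image, Set.mem_image, Finset.mem_coe, Finset.mem_range]
    exact ⟨i % minimalPeriod f x, Nat.mod_lt _ hd, iterate_mod_minimalPeriod_eq⟩
  · intro hz
    simp only [Finset.coe_image, Set.mem_image, Finset.mem_coe, Finset.mem_range] at hz
    obtain ⟨i, _, rfl⟩ := hz
    exact ⟨i, rfl⟩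

open scoped Classical in
lemma orbSet_finite {f : X → X} {x : X} (hx : x ∈ periodicPts f) : (orbSet f x).Finite := by
  rw [orbSet_eq_image hx]; exact Finset.finite_toSet _

open scoped Classical in
lemma ncard_orbSet {f : X → X} {x : X} (hx : x ∈ periodicPts f) :
    (orbSet f x).ncard = minimalPeriod f x := by
  rw [orbSet_eq_image hx, Set.ncard_coe_finset,
    Finset.card_image_of_injOn (fun a ha b hb hab =>
      iterate_injOn_Iio_minimalPeriod (by simpa using ha) (by simpa using hb) hab),
    Finset.card_range]

lemma iterate_eq_iterate_iff_mod {f : X → X} {r : X} (hd : 0 < minimalPeriod f r) {i j : ℕ} :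
    f^[i] r = f^[j] r ↔ i % minimalPeriod f r = j % minimalPeriod f r := by
  constructor
  · intro h
    have h1 : f^[i % minimalPeriod f r] r = f^[j % minimalPeriod f r] r := by
      rw [iterate_mod_minimalPeriod_eq, iterate_mod_minimalPeriod_eq, h]
    exact (iterate_eq_iterate_iff_of_lt_minimalPeriod (Nat.mod_lt _ hd) (Nat.mod_lt _ hd)).mp h1
  · intro h
    rw [← iterate_mod_minimalPeriod_eq (n := i), h, iterate_mod_minimalPeriod_eq]

lemma perSet_subset_fixSet (f : X → X) (d : ℕ) : perSet f d ⊆ fixSet f d := by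
  intro x hx
  have : f^[minimalPeriod f x] x = x := iterate_minimalPeriod
  rwa [hx] at this

lemma perSet_subset_fixSet_of_dvd (f : X → X) {d m : ℕ} (hdm : d ∣ m) :
    perSet f d ⊆ fixSet f m := by
  intro x hx
  exact isPeriodicPt_iff_minimalPeriod_dvd.mpr (hx ▸ hdm)

lemma fixSet_ncard_eq_sum (f : X → X) (m : ℕ) (hm : m ≠ 0)
    (hper : ∀ x : X, x ∈ periodicPts f) (hfin : (fixSet f m).Finite) :
    (fixSet f m).ncard = ∑ d ∈ m.divisors, (perSet f d).ncard := by
  classical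
  have hsub : ∀ d ∈ m.divisors, perSet f d ⊆ fixSet f m := fun d hd =>
    perSet_subset_fixSet_of_dvd f (Nat.mem_divisors.mp hd).1
  have hmain : hfin.toFinset.card =
      ∑ d ∈ m.divisors, (hfin.toFinset.filter (fun x => minimalPeriod f x = d)).card := by
    apply Finset.card_eq_sum_card_fiberwise
    intro x hx
    rw [Finset.mem_coe, Set.Finite.mem_toFinset] at hx
    exact Nat.mem_divisors.mpr ⟨Function.IsPeriodicPt.minimalPeriod_dvd hx, hm⟩
  rw [Set.ncard_eq_toFinset_card _ hfin, hmain]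
  apply Finset.sum_congr rfl
  intro d hd
  have : ((hfin.toFinset.filter (fun x => minimalPeriod f x = d)) : Set X) = perSet f d := by
    ext x
    simp only [Finset.coe_filter, Set.Finite.mem_toFinset, Set.mem_setOf_eq]
    exact ⟨fun h => h.2, fun h => ⟨hsub d hd h, h⟩⟩
  rw [← Set.ncard_coe_finset, this]

lemma perSet_ncard_eq (σ : X → X) (τ : Y → Y)
    (hpX : ∀ x : X, x ∈ periodicPts σ) (hpY : ∀ y : Y, y ∈ periodicPts τ)
    (hfinX : ∀ m : ℕ, m ≠ 0 → (fixSet σ m).Finite)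
    (hfinY : ∀ m : ℕ, m ≠ 0 → (fixSet τ m).Finite)
    (hcard : ∀ m : ℕ, m ≠ 0 → (fixSet σ m).ncard = (fixSet τ m).ncard) :
    ∀ d : ℕ, d ≠ 0 → (perSet σ d).ncard = (perSet τ d).ncard := by
  intro d
  induction d using Nat.strong_induction_on with
  | _ d ih =>
    intro hd
    have hX := fixSet_ncard_eq_sum σ d hd hpX (hfinX d hd)
    have hY := fixSet_ncard_eq_sum τ d hd hpY (hfinY d hd)
    rw [← Nat.cons_self_properDivisors hd, Finset.sum_cons] at hX hY
    have hprop : ∑ e ∈ d.properDivisors, (perSet σ e).ncard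
        = ∑ e ∈ d.properDivisors, (perSet τ e).ncard := by
      apply Finset.sum_congr rfl
      intro e he
      obtain ⟨hdvd, hlt⟩ := Nat.mem_properDivisors.mp he
      have he0 : e ≠ 0 := by rintro rfl; exact hd (Nat.eq_zero_of_zero_dvd hdvd)
      exact ih e hlt he0
    have := hcard d hd
    omega

lemma ncard_perSet_eq_mul {f : X → X} (hper : ∀ x : X, x ∈ periodicPts f) (d : ℕ)
    (hfin : (perSet f d).Finite) :
    (perSet f d).ncard = d * (orbSet f '' perSet f d).ncard := by
  classical
  set P := hfin.toFinset with hP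
  have h1 : P.card = ∑ A ∈ P.image (orbSet f), (P.filter (fun x => orbSet f x = A)).card :=
    Finset.card_eq_sum_card_fiberwise (fun x hx => Finset.mem_image_of_mem _ hx)
  have h2 : ∀ A ∈ P.image (orbSet f), (P.filter (fun x => orbSet f x = A)).card = d := by
    intro A hA
    obtain ⟨x₀, hx₀, rfl⟩ := Finset.mem_image.mp hA
    rw [Set.Finite.mem_toFinset] at hx₀
    have hset : ((P.filter (fun x => orbSet f x = orbSet f x₀)) : Set X) = orbSet f x₀ := by
      ext z
      simp only [Finset.coe_filter, Set.mem_setOf_eq, Set.Finite.mem_toFinset, hP]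
      constructor
      · rintro ⟨-, hz⟩; rw [← hz]; exact mem_orbSet_self f z
      · intro hz
        refine ⟨?_, orbSet_eq_of_mem (hper x₀) hz⟩
        show minimalPeriod f z = d
        rw [minimalPeriod_of_mem_orbSet (hper x₀) hz]; exact hx₀
    have : ((P.filter (fun x => orbSet f x = orbSet f x₀)) : Set X).ncard = d := by
      rw [hset, ncard_orbSet (hper x₀)]; exact hx₀
    rwa [Set.ncard_coe_finset] at this
  have h3 : P.card = (P.image (orbSet f)).card * d := by
    rw [h1, Finset.sum_congr rfl h2, Finset.sum_const, smul_eq_mul]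
  have h4 : orbSet f '' perSet f d = ↑(P.image (orbSet f)) := by
    rw [Finset.coe_image, Set.Finite.coe_toFinset]
  rw [Set.ncard_eq_toFinset_card _ hfin, h4, Set.ncard_coe_finset, h3, mul_comm]

theorem exists_equivariant_equiv (σ : X → X) (τ : Y → Y)
    (hpX : ∀ x : X, x ∈ periodicPts σ) (hpY : ∀ y : Y, y ∈ periodicPts τ)
    (hfinX : ∀ m : ℕ, m ≠ 0 → (fixSet σ m).Finite)
    (hfinY : ∀ m : ℕ, m ≠ 0 → (fixSet τ m).Finite)
    (hcard : ∀ m : ℕ, m ≠ 0 → (fixSet σ m).ncard = (fixSet τ m).ncard) :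
    ∃ e : X ≃ Y, ∀ x, e (σ x) = τ (e x) := by
  classical
  rcases isEmpty_or_nonempty X with hXe | hXn
  · rcases isEmpty_or_nonempty Y with hYe | hYn
    · exact ⟨Equiv.equivOfIsEmpty X Y, fun x => (IsEmpty.false x).elim⟩
    · exfalso
      obtain ⟨y⟩ := hYn
      have hd : minimalPeriod τ y ≠ 0 := (minimalPeriod_pos_of_mem_periodicPts (hpY y)).ne'
      have h1 : (fixSet σ (minimalPeriod τ y)).ncard = 0 := by
        rw [Set.eq_empty_of_isEmpty (fixSet σ (minimalPeriod τ y))]; simp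
      have h2 : y ∈ fixSet τ (minimalPeriod τ y) := perSet_subset_fixSet τ _ rfl
      have h3 := (Set.ncard_pos (hfinY _ hd)).mpr ⟨y, h2⟩
      have := hcard _ hd
      omega
  rcases isEmpty_or_nonempty Y with hYe | hYn
  · exfalso
    obtain ⟨x⟩ := hXn
    have hd : minimalPeriod σ x ≠ 0 := (minimalPeriod_pos_of_mem_periodicPts (hpX x)).ne'
    have h1 : (fixSet τ (minimalPeriod σ x)).ncard = 0 := by
      rw [Set.eq_empty_of_isEmpty (fixSet τ (minimalPeriod σ x))]; simp
    have h2 : x ∈ fixSet σ (minimalPeriod σ x) := perSet_subset_fixSet σ _ rfl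
    have h3 := (Set.ncard_pos (hfinX _ hd)).mpr ⟨x, h2⟩
    have := hcard _ hd
    omega
  -- main case
  have hfinPX : ∀ d : ℕ, d ≠ 0 → (perSet σ d).Finite :=
    fun d hd => (hfinX d hd).subset (perSet_subset_fixSet σ d)
  have hfinPY : ∀ d : ℕ, d ≠ 0 → (perSet τ d).Finite :=
    fun d hd => (hfinY d hd).subset (perSet_subset_fixSet τ d)
  have horb : ∀ d : ℕ, d ≠ 0 →
      (orbSet σ '' perSet σ d).ncard = (orbSet τ '' perSet τ d).ncard := by
    intro d hd
    have h1 := ncard_perSet_eq_mul hpX d (hfinPX d hd)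
    have h2 := ncard_perSet_eq_mul hpY d (hfinPY d hd)
    have h3 := perSet_ncard_eq σ τ hpX hpY hfinX hfinY hcard d hd
    rw [h1, h2] at h3
    exact Nat.eq_of_mul_eq_mul_left (Nat.pos_of_ne_zero hd) h3
  have hphi : ∀ d : ℕ, ∃ F : Set X → Set Y,
      d ≠ 0 → Set.BijOn F (orbSet σ '' perSet σ d) (orbSet τ '' perSet τ d) := by
    intro d
    by_cases hd : d = 0
    · exact ⟨fun _ => ∅, fun h => absurd hd h⟩
    · have hfX : (orbSet σ '' perSet σ d).Finite := (hfinPX d hd).image _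
      have hfY : (orbSet τ '' perSet τ d).Finite := (hfinPY d hd).image _
      have henc : (orbSet σ '' perSet σ d).encard = (orbSet τ '' perSet τ d).encard := by
        rw [← hfX.cast_ncard_eq, ← hfY.cast_ncard_eq, horb d hd]
      obtain ⟨F, hF⟩ := Set.Finite.exists_bijOn_of_encard_eq hfX henc
      exact ⟨F, fun _ => hF⟩
  choose φ hφ using hphi
  set ψ : ℕ → Set Y → Set X := fun d => Function.invFunOn (φ d) (orbSet σ '' perSet σ d) with hψdef
  have hψ1 : ∀ d : ℕ, d ≠ 0 → ∀ A ∈ orbSet σ '' perSet σ d, ψ d (φ d A) = A :=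
    fun d hd A hA => (hφ d hd).invOn_invFunOn.1 hA
  have hψ2 : ∀ d : ℕ, d ≠ 0 → ∀ B ∈ orbSet τ '' perSet τ d, φ d (ψ d B) = B :=
    fun d hd B hB => (hφ d hd).invOn_invFunOn.2 hB
  have hψ3 : ∀ d : ℕ, d ≠ 0 → ∀ B ∈ orbSet τ '' perSet τ d,
      ψ d B ∈ orbSet σ '' perSet σ d := by
    intro d hd B hB
    obtain ⟨A, hA, rfl⟩ := (hφ d hd).surjOn hB
    rw [hψ1 d hd A hA]; exact hA
  -- representatives
  set repX : Set X → X := fun A => if h : ∃ x, orbSet σ x = A then h.choose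
    else Classical.arbitrary X with hrepXdef
  set repY : Set Y → Y := fun B => if h : ∃ y, orbSet τ y = B then h.choose
    else Classical.arbitrary Y with hrepYdef
  have hrepX1 : ∀ x₀ : X, orbSet σ (repX (orbSet σ x₀)) = orbSet σ x₀ ∧
      minimalPeriod σ (repX (orbSet σ x₀)) = minimalPeriod σ x₀ := by
    intro x₀
    have h : ∃ x, orbSet σ x = orbSet σ x₀ := ⟨x₀, rfl⟩
    have hc : orbSet σ h.choose = orbSet σ x₀ := h.choose_spec
    have hrw : repX (orbSet σ x₀) = h.choose := by rw [hrepXdef]; simp only [dif_pos h]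
    refine ⟨by rw [hrw]; exact hc, ?_⟩
    rw [hrw]
    exact minimalPeriod_of_mem_orbSet (hpX x₀) (hc.subset (mem_orbSet_self σ h.choose))
  have hrepY1 : ∀ y₀ : Y, orbSet τ (repY (orbSet τ y₀)) = orbSet τ y₀ ∧
      minimalPeriod τ (repY (orbSet τ y₀)) = minimalPeriod τ y₀ := by
    intro y₀
    have h : ∃ y, orbSet τ y = orbSet τ y₀ := ⟨y₀, rfl⟩
    have hc : orbSet τ h.choose = orbSet τ y₀ := h.choose_spec
    have hrw : repY (orbSet τ y₀) = h.choose := by rw [hrepYdef]; simp only [dif_pos h]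
    refine ⟨by rw [hrw]; exact hc, ?_⟩
    rw [hrw]
    exact minimalPeriod_of_mem_orbSet (hpY y₀) (hc.subset (mem_orbSet_self τ h.choose))
  have hrepX2 : ∀ d : ℕ, ∀ A ∈ orbSet σ '' perSet σ d,
      orbSet σ (repX A) = A ∧ minimalPeriod σ (repX A) = d := by
    rintro d A ⟨x₀, hx₀, rfl⟩
    exact ⟨(hrepX1 x₀).1, by rw [(hrepX1 x₀).2]; exact hx₀⟩
  have hrepY2 : ∀ d : ℕ, ∀ B ∈ orbSet τ '' perSet τ d,
      orbSet τ (repY B) = B ∧ minimalPeriod τ (repY B) = d := by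
    rintro d B ⟨y₀, hy₀, rfl⟩
    exact ⟨(hrepY1 y₀).1, by rw [(hrepY1 y₀).2]; exact hy₀⟩
  -- logarithms
  have hlogX_ex : ∀ x : X, ∃ i, σ^[i] (repX (orbSet σ x)) = x := by
    intro x
    exact ((hrepX1 x).1).symm.subset (mem_orbSet_self σ x)
  have hlogY_ex : ∀ y : Y, ∃ i, τ^[i] (repY (orbSet τ y)) = y := by
    intro y
    exact ((hrepY1 y).1).symm.subset (mem_orbSet_self τ y)
  set logX : X → ℕ := fun x => (hlogX_ex x).choose with hlogXdef
  set logY : Y → ℕ := fun y => (hlogY_ex y).choose with hlogYdef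
  have hlogX : ∀ x, σ^[logX x] (repX (orbSet σ x)) = x := fun x => (hlogX_ex x).choose_spec
  have hlogY : ∀ y, τ^[logY y] (repY (orbSet τ y)) = y := fun y => (hlogY_ex y).choose_spec
  -- the maps
  set F : X → Y := fun x => τ^[logX x] (repY (φ (minimalPeriod σ x) (orbSet σ x))) with hFdef
  set G : Y → X := fun y => σ^[logY y] (repX (ψ (minimalPeriod τ y) (orbSet τ y))) with hGdef
  -- basic facts for a given x
  have hmemA : ∀ x : X, orbSet σ x ∈ orbSet σ '' perSet σ (minimalPeriod σ x) :=
    fun x => ⟨x, rfl, rfl⟩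
  have hmemB : ∀ y : Y, orbSet τ y ∈ orbSet τ '' perSet τ (minimalPeriod τ y) :=
    fun y => ⟨y, rfl, rfl⟩
  have hdX : ∀ x : X, minimalPeriod σ x ≠ 0 :=
    fun x => (minimalPeriod_pos_of_mem_periodicPts (hpX x)).ne'
  have hdY : ∀ y : Y, minimalPeriod τ y ≠ 0 :=
    fun y => (minimalPeriod_pos_of_mem_periodicPts (hpY y)).ne'
  -- facts about F x
  have hFfacts : ∀ x : X, minimalPeriod τ (F x) = minimalPeriod σ x ∧
      orbSet τ (F x) = φ (minimalPeriod σ x) (orbSet σ x) := by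
    intro x
    set d := minimalPeriod σ x
    have hB : φ d (orbSet σ x) ∈ orbSet τ '' perSet τ d := (hφ d (hdX x)).mapsTo (hmemA x)
    obtain ⟨hr'orb, hr'per⟩ := hrepY2 d _ hB
    have hFx : F x = τ^[logX x] (repY (φ d (orbSet σ x))) := rfl
    constructor
    · rw [hFx, minimalPeriod_apply_iterate (hpY _) (logX x), hr'per]
    · rw [hFx, orbSet_eq_of_mem (hpY _) (mem_orbSet_iter τ _ (logX x)), hr'orb]
  have hGfacts : ∀ y : Y, minimalPeriod σ (G y) = minimalPeriod τ y ∧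
      orbSet σ (G y) = ψ (minimalPeriod τ y) (orbSet τ y) := by
    intro y
    set d := minimalPeriod τ y
    have hA : ψ d (orbSet τ y) ∈ orbSet σ '' perSet σ d := hψ3 d (hdY y) _ (hmemB y)
    obtain ⟨hrorb, hrper⟩ := hrepX2 d _ hA
    have hGy : G y = σ^[logY y] (repX (ψ d (orbSet τ y))) := rfl
    constructor
    · rw [hGy, minimalPeriod_apply_iterate (hpX _) (logY y), hrper]
    · rw [hGy, orbSet_eq_of_mem (hpX _) (mem_orbSet_iter σ _ (logY y)), hrorb]
  -- left inverse
  have hGF : ∀ x : X, G (F x) = x := by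
    intro x
    set d := minimalPeriod σ x with hd
    obtain ⟨hper', horb'⟩ := hFfacts x
    have hB : φ d (orbSet σ x) ∈ orbSet τ '' perSet τ d := (hφ d (hdX x)).mapsTo (hmemA x)
    obtain ⟨hr'orb, hr'per⟩ := hrepY2 d _ hB
    obtain ⟨hrorb, hrper⟩ := hrepX2 d _ (hmemA x)
    have hGFx : G (F x) = σ^[logY (F x)] (repX (ψ d (φ d (orbSet σ x)))) := by
      rw [hGdef]; simp only []
      rw [hper', horb']
    rw [hGFx, hψ1 d (hdX x) _ (hmemA x)]
    -- now σ^[logY (F x)] (repX (orbSet σ x)) = x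
    have h1 : τ^[logY (F x)] (repY (φ d (orbSet σ x))) = F x := by
      have := hlogY (F x); rwa [horb'] at this
    have h2 : τ^[logX x] (repY (φ d (orbSet σ x))) = F x := rfl
    have hmod : logY (F x) % d = logX x % d := by
      have hpos : 0 < minimalPeriod τ (repY (φ d (orbSet σ x))) := by
        rw [hr'per]; exact Nat.pos_of_ne_zero (hdX x)
      have := (iterate_eq_iterate_iff_mod hpos).mp (h1.trans h2.symm)
      rwa [hr'per] at this
    have hposX : 0 < minimalPeriod σ (repX (orbSet σ x)) := by
      rw [hrper]; exact Nat.pos_of_ne_zero (hdX x)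
    have : σ^[logY (F x)] (repX (orbSet σ x)) = σ^[logX x] (repX (orbSet σ x)) := by
      rw [iterate_eq_iterate_iff_mod hposX, hrper]; exact hmod
    rw [this, hlogX x]
  -- right inverse
  have hFG : ∀ y : Y, F (G y) = y := by
    intro y
    set d := minimalPeriod τ y with hd
    obtain ⟨hper', horb'⟩ := hGfacts y
    have hA : ψ d (orbSet τ y) ∈ orbSet σ '' perSet σ d := hψ3 d (hdY y) _ (hmemB y)
    obtain ⟨hrorb, hrper⟩ := hrepX2 d _ hA
    obtain ⟨hr'orb, hr'per⟩ := hrepY2 d _ (hmemB y)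
    have hFGy : F (G y) = τ^[logX (G y)] (repY (φ d (ψ d (orbSet τ y)))) := by
      rw [hFdef]; simp only []
      rw [hper', horb']
    rw [hFGy, hψ2 d (hdY y) _ (hmemB y)]
    have h1 : σ^[logX (G y)] (repX (ψ d (orbSet τ y))) = G y := by
      have := hlogX (G y); rwa [horb'] at this
    have h2 : σ^[logY y] (repX (ψ d (orbSet τ y))) = G y := rfl
    have hmod : logX (G y) % d = logY y % d := by
      have hpos : 0 < minimalPeriod σ (repX (ψ d (orbSet τ y))) := by
        rw [hrper]; exact Nat.pos_of_ne_zero (hdY y)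
      have := (iterate_eq_iterate_iff_mod hpos).mp (h1.trans h2.symm)
      rwa [hrper] at this
    have hposY : 0 < minimalPeriod τ (repY (orbSet τ y)) := by
      rw [hr'per]; exact Nat.pos_of_ne_zero (hdY y)
    have : τ^[logX (G y)] (repY (orbSet τ y)) = τ^[logY y] (repY (orbSet τ y)) := by
      rw [iterate_eq_iterate_iff_mod hposY, hr'per]; exact hmod
    rw [this, hlogY y]
  -- equivariance
  have hequiv : ∀ x : X, F (σ x) = τ (F x) := by
    intro x
    set d := minimalPeriod σ x with hd
    have hperσx : minimalPeriod σ (σ x) = d := minimalPeriod_apply (hpX x)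
    have horbσx : orbSet σ (σ x) = orbSet σ x := by
      have : σ x ∈ orbSet σ x := ⟨1, by simp⟩
      exact orbSet_eq_of_mem (hpX x) this
    obtain ⟨hrorb, hrper⟩ := hrepX2 d _ (hmemA x)
    have hB : φ d (orbSet σ x) ∈ orbSet τ '' perSet τ d := (hφ d (hdX x)).mapsTo (hmemA x)
    obtain ⟨hr'orb, hr'per⟩ := hrepY2 d _ hB
    have hFσx : F (σ x) = τ^[logX (σ x)] (repY (φ d (orbSet σ x))) := by
      rw [hFdef]; simp only []
      rw [hperσx, horbσx]
    have h1 : σ^[logX (σ x)] (repX (orbSet σ x)) = σ x := by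
      have := hlogX (σ x); rwa [horbσx] at this
    have h2 : σ^[logX x + 1] (repX (orbSet σ x)) = σ x := by
      rw [Function.iterate_succ_apply', hlogX x]
    have hposX : 0 < minimalPeriod σ (repX (orbSet σ x)) := by
      rw [hrper]; exact Nat.pos_of_ne_zero (hdX x)
    have hmod : logX (σ x) % d = (logX x + 1) % d := by
      have := (iterate_eq_iterate_iff_mod hposX).mp (h1.trans h2.symm)
      rwa [hrper] at this
    have hposY : 0 < minimalPeriod τ (repY (φ d (orbSet σ x))) := by
      rw [hr'per]; exact Nat.pos_of_ne_zero (hdX x)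
    have h3 : τ^[logX (σ x)] (repY (φ d (orbSet σ x)))
        = τ^[logX x + 1] (repY (φ d (orbSet σ x))) := by
      rw [iterate_eq_iterate_iff_mod hposY, hr'per]; exact hmod
    rw [hFσx, h3, Function.iterate_succ_apply']
  exact ⟨Equiv.mk F G hGF hFG, hequiv⟩

lemma nSetCount_congr (σ : X → X) (τ : Y → Y) (e : X ≃ Y)
    (he : ∀ x, e (σ x) = τ (e x)) (n : ℕ) :
    nSetCount σ Set.univ n = nSetCount τ Set.univ n := by
  have hset : {T : Set Y | T ⊆ Set.univ ∧ T.Finite ∧ T.ncard = n ∧ τ '' T = T}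
      = (Set.image e) '' {S : Set X | S ⊆ Set.univ ∧ S.Finite ∧ S.ncard = n ∧ σ '' S = S} := by
    ext T
    simp only [Set.mem_setOf_eq, Set.mem_image]
    constructor
    · rintro ⟨-, hfin, hcard, hstab⟩
      refine ⟨e.symm '' T, ⟨Set.subset_univ _, hfin.image _, ?_, ?_⟩, ?_⟩
      · rw [Set.ncard_image_of_injective _ e.symm.injective, hcard]
      · have hcomm : ∀ y, σ (e.symm y) = e.symm (τ y) := by
          intro y; apply e.injective; rw [he, e.apply_symm_apply, e.apply_symm_apply]
        calc σ '' (e.symm '' T) = e.symm '' (τ '' T) := by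
              rw [← Set.image_comp, ← Set.image_comp]
              exact Set.image_congr (fun y _ => hcomm y)
          _ = e.symm '' T := by rw [hstab]
      · rw [← Set.image_comp]
        simp only [Equiv.self_comp_symm, Set.image_id]
    · rintro ⟨S, ⟨-, hfin, hcard, hstab⟩, rfl⟩
      refine ⟨Set.subset_univ _, hfin.image _,
        by rw [Set.ncard_image_of_injective _ e.injective, hcard], ?_⟩
      calc τ '' (e '' S) = e '' (σ '' S) := by
            rw [← Set.image_comp, ← Set.image_comp]
            exact Set.image_congr (fun x _ => (he x).symm)
        _ = e '' S := by rw [hstab]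
  rw [nSetCount, nSetCount, hset,
    Set.ncard_image_of_injective _ (Set.image_injective.mpr e.injective)]

end dynamics

lemma fix_pow_finite_card (K : Type*) [Field K] [IsAlgClosed K] (p r : ℕ) [Fact p.Prime]
    [CharP K p] (hr : r ≠ 0) :
    {y : K | y ^ p ^ r = y}.Finite ∧ {y : K | y ^ p ^ r = y}.ncard = p ^ r := by
  classical
  have hp : 1 < p := (Fact.out : p.Prime).one_lt
  have hne : (X ^ p ^ r - X : K[X]) ≠ 0 := FiniteField.X_pow_card_pow_sub_X_ne_zero K hr hp
  have hsep : (X ^ p ^ r - X : K[X]).Separable :=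
    galois_poly_separable p (p ^ r) (dvd_pow_self p hr)
  have hsplits : Splits (X ^ p ^ r - X : K[X]) := IsAlgClosed.splits _
  have hdeg : (X ^ p ^ r - X : K[X]).natDegree = p ^ r :=
    FiniteField.X_pow_card_pow_sub_X_natDegree_eq K hr hp
  have hset : {y : K | y ^ p ^ r = y} = ↑(X ^ p ^ r - X : K[X]).roots.toFinset := by
    ext y
    simp only [Set.mem_setOf_eq, Finset.coe_sort_coe, Multiset.mem_toFinset, Finset.mem_coe,
      mem_roots hne, IsRoot.def, eval_sub, eval_pow, eval_X]
    rw [sub_eq_zero]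
  constructor
  · rw [hset]; exact Finset.finite_toSet _
  · rw [hset, Set.ncard_coe_finset, Multiset.toFinset_card_of_nodup (nodup_roots hsep),
      Polynomial.splits_iff_card_roots.mp hsplits, hdeg]

lemma exists_pow_card_pow_eq (k : Type*) [Field k] [Fintype k] (y : AlgebraicClosure k) :
    ∃ m : ℕ, m ≠ 0 ∧ y ^ Fintype.card k ^ m = y := by
  have hint : IsIntegral k y := (Algebra.IsAlgebraic.isAlgebraic (R := k) y).isIntegral
  haveI : FiniteDimensional k k⟮y⟯ := IntermediateField.adjoin.finiteDimensional hint
  haveI : Finite k⟮y⟯ := Module.finite_of_finite k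
  haveI : Fintype k⟮y⟯ := Fintype.ofFinite _
  refine ⟨Module.finrank k k⟮y⟯, Module.finrank_pos.ne', ?_⟩
  have hcard : Fintype.card k⟮y⟯ = Fintype.card k ^ Module.finrank k k⟮y⟯ :=
    Module.card_eq_pow_finrank
  set y' : k⟮y⟯ := ⟨y, IntermediateField.mem_adjoin_simple_self k y⟩ with hy'
  have := FiniteField.pow_card y'
  rw [hcard] at this
  have := congrArg (Subtype.val) this
  push_cast at this
  simpa using this

lemma pow_pow_of_dvd {K : Type*} [Monoid K] (y : K) (q a b : ℕ) (h : y ^ q ^ a = y)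
    (hab : a ∣ b) : y ^ q ^ b = y := by
  obtain ⟨c, rfl⟩ := hab
  induction c with
  | zero => simpa using h
  | succ n ih =>
    have : q ^ (a * (n + 1)) = q ^ (a * n) * q ^ a := by ring
    rw [this, pow_mul, ih, h]

/-- Monic polynomials of degree `n` biject with polynomials of degree `< n`. -/
noncomputable def monicEquiv (F : Type*) [Field F] (n : ℕ) :
    {g : F[X] // g.Monic ∧ g.natDegree = n} ≃ (Polynomial.degreeLT F n) where
  toFun g := ⟨g.1 - X ^ n, by
    rw [Polynomial.mem_degreeLT]
    have h1 : (X ^ n : F[X]).degree = n := degree_X_pow n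
    have h3 : g.1.degree = n := by
      rw [degree_eq_natDegree g.2.1.ne_zero, g.2.2]
    by_cases hzero : g.1 - X ^ n = 0
    · rw [hzero, degree_zero]; exact WithBot.bot_lt_coe n
    · have := Polynomial.degree_sub_lt (h3.trans h1.symm) g.2.1.ne_zero
        (by rw [g.2.1.leadingCoeff, (monic_X_pow n).leadingCoeff])
      rwa [h3] at this⟩
  invFun p := ⟨p.1 + X ^ n, by
    have hdeg : p.1.degree < (X ^ n : F[X]).degree := by
      rw [degree_X_pow]; exact Polynomial.mem_degreeLT.mp p.2
    have hdeq : (p.1 + X ^ n).degree = (X ^ n : F[X]).degree :=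
      Polynomial.degree_add_eq_right_of_degree_lt hdeg
    constructor
    · have hlc := Polynomial.leadingCoeff_add_of_degree_lt hdeg
      have hxm : (X ^ n : F[X]).Monic := monic_X_pow n
      exact hlc.trans hxm
    · exact Polynomial.natDegree_eq_of_degree_eq_some (hdeq.trans (degree_X_pow n))⟩
  left_inv g := by ext1; ring
  right_inv p := by ext1; ring

lemma card_monic (F : Type*) [Field F] [Fintype F] (n : ℕ) :
    Nat.card {g : F[X] // g.Monic ∧ g.natDegree = n} = Fintype.card F ^ n := by
  rw [Nat.card_congr (monicEquiv F n),
    Nat.card_congr (Polynomial.degreeLTEquiv F n).toEquiv, Nat.card_pi]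
  simp [Nat.card_eq_fintype_card]

instance monicFinite (F : Type*) [Field F] [Fintype F] (n : ℕ) :
    Finite {g : F[X] // g.Monic ∧ g.natDegree = n} := by
  have e := (monicEquiv F n).trans (Polynomial.degreeLTEquiv F n).toEquiv
  exact Finite.of_equiv _ e.symm

instance sfFinite (F : Type*) [Field F] [Fintype F] (n : ℕ) :
    Finite {g : F[X] // g.Monic ∧ g.natDegree = n ∧ Squarefree g} := by
  apply Finite.of_injective
    (fun g : {g : F[X] // g.Monic ∧ g.natDegree = n ∧ Squarefree g} =>
      (⟨g.1, g.2.1, g.2.2.1⟩ : {g : F[X] // g.Monic ∧ g.natDegree = n}))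
  intro a b hab
  exact Subtype.ext (congrArg Subtype.val hab :)

lemma exists_sq_decomp {F : Type*} [Field F] :
    ∀ (n : ℕ) (g : F[X]), g.Monic → g.natDegree = n →
      ∃ s u : F[X], s.Monic ∧ u.Monic ∧ Squarefree s ∧ g = s * u ^ 2 := by
  intro n
  induction n using Nat.strong_induction_on with
  | _ n ih =>
    intro g hg hdeg
    by_cases hsf : Squarefree g
    · exact ⟨g, 1, hg, monic_one, hsf, by ring⟩
    · have hex : ∃ a : F[X], a * a ∣ g ∧ ¬IsUnit a := by
        rw [Squarefree] at hsf
        push_neg at hsf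
        exact hsf
      obtain ⟨a, ha2, hau⟩ := hex
      have ha0 : a ≠ 0 := by
        rintro rfl
        rw [mul_zero] at ha2
        exact hg.ne_zero (zero_dvd_iff.mp ha2)
      have hlc0 : a.leadingCoeff⁻¹ ≠ 0 := inv_ne_zero (Polynomial.leadingCoeff_ne_zero.mpr ha0)
      set b := a * C a.leadingCoeff⁻¹ with hb
      have hbmonic : b.Monic := Polynomial.monic_mul_leadingCoeff_inv ha0
      have hbb : b * b ∣ g := by
        obtain ⟨v, hv⟩ := ha2
        refine ⟨C a.leadingCoeff * C a.leadingCoeff * v, ?_⟩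
        rw [hb, hv]
        have hcc : C a.leadingCoeff⁻¹ * C a.leadingCoeff = 1 := by
          rw [← C_mul, inv_mul_cancel₀ (Polynomial.leadingCoeff_ne_zero.mpr ha0), C_1]
        calc a * a * v = a * a * ((C a.leadingCoeff⁻¹ * C a.leadingCoeff) *
              (C a.leadingCoeff⁻¹ * C a.leadingCoeff)) * v := by rw [hcc]; ring
          _ = a * C a.leadingCoeff⁻¹ * (a * C a.leadingCoeff⁻¹) *
              (C a.leadingCoeff * C a.leadingCoeff * v) := by ring
      obtain ⟨w, hw⟩ := hbb
      have hwmonic : w.Monic := by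
        have hm : (b * b * w).Monic := hw ▸ hg
        exact (hbmonic.mul hbmonic).of_mul_monic_left hm
      have hb1 : 1 ≤ b.natDegree := by
        rcases Nat.eq_zero_or_pos b.natDegree with h0 | h1
        · exfalso
          have hb1' : b = 1 := hbmonic.natDegree_eq_zero.mp h0
          apply hau
          exact IsUnit.of_mul_eq_one (C a.leadingCoeff⁻¹) (hb ▸ hb1')
        · exact h1
      have hdegw : w.natDegree < n := by
        have : g.natDegree = b.natDegree + b.natDegree + w.natDegree := by
          rw [hw, (hbmonic.mul hbmonic).natDegree_mul hwmonic, hbmonic.natDegree_mul hbmonic]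
        omega
      obtain ⟨s, u, hsm, hum, hssf, hsu⟩ := ih w.natDegree hdegw w hwmonic rfl
      exact ⟨s, u * b, hsm, hum.mul hbmonic, hssf, by rw [hw, hsu]; ring⟩

open UniqueFactorizationMonoid in
lemma sq_decomp_unique {F : Type*} [Field F] {s u s' u' : F[X]}
    (hs : s.Monic) (hu : u.Monic) (hs' : s'.Monic) (hu' : u'.Monic)
    (hsf : Squarefree s) (hsf' : Squarefree s')
    (heq : s * u ^ 2 = s' * u' ^ 2) : s = s' ∧ u = u' := by
  classical
  have hs0 : s ≠ 0 := hs.ne_zero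
  have hu0 : u ≠ 0 := hu.ne_zero
  have hs'0 : s' ≠ 0 := hs'.ne_zero
  have hu'0 : u' ≠ 0 := hu'.ne_zero
  have hcount : ∀ P : F[X],
      Multiset.count P (normalizedFactors s) + 2 * Multiset.count P (normalizedFactors u) =
      Multiset.count P (normalizedFactors s') + 2 * Multiset.count P (normalizedFactors u') := by
    intro P
    have h1 : normalizedFactors (s * u ^ 2) =
        normalizedFactors s + 2 • normalizedFactors u := by
      rw [normalizedFactors_mul hs0 (pow_ne_zero 2 hu0), normalizedFactors_pow]
    have h2 : normalizedFactors (s' * u' ^ 2) =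
        normalizedFactors s' + 2 • normalizedFactors u' := by
      rw [normalizedFactors_mul hs'0 (pow_ne_zero 2 hu'0), normalizedFactors_pow]
    have := congrArg (Multiset.count P) (h1 ▸ h2 ▸ congrArg normalizedFactors heq)
    simpa [Multiset.count_nsmul, two_mul, mul_comm] using this
  have hles : ∀ P : F[X], Multiset.count P (normalizedFactors s) ≤ 1 :=
    fun P => Multiset.nodup_iff_count_le_one.mp
      ((squarefree_iff_nodup_normalizedFactors hs0).mp hsf) P
  have hles' : ∀ P : F[X], Multiset.count P (normalizedFactors s') ≤ 1 :=
    fun P => Multiset.nodup_iff_count_le_one.mp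
      ((squarefree_iff_nodup_normalizedFactors hs'0).mp hsf') P
  have hueq : normalizedFactors u = normalizedFactors u' := by
    ext P
    have := hcount P
    have := hles P
    have := hles' P
    omega
  have huu' : u = u' := by
    have h1 : Associated (normalizedFactors u).prod u := prod_normalizedFactors hu0
    have h2 : Associated (normalizedFactors u').prod u' := prod_normalizedFactors hu'0
    rw [hueq] at h1
    exact Polynomial.eq_of_monic_of_associated hu hu' (h1.symm.trans h2)
  refine ⟨?_, huu'⟩
  rw [huu'] at heq
  exact mul_right_cancel₀ (pow_ne_zero 2 hu'0) heq

/-- The decomposition `g = s * u²` as an equivalence. -/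
noncomputable def sqDecompEquiv (F : Type*) [Field F] (n : ℕ) :
    (Σ j : Fin (n / 2 + 1),
      {g : F[X] // g.Monic ∧ g.natDegree = n - 2 * j ∧ Squarefree g} ×
      {g : F[X] // g.Monic ∧ g.natDegree = j}) ≃
    {g : F[X] // g.Monic ∧ g.natDegree = n} := by
  apply Equiv.ofBijective (fun x => ⟨x.2.1.1 * x.2.2.1 ^ 2, by
    obtain ⟨j, s, u⟩ := x
    have hj : 2 * (j : ℕ) ≤ n := by
      have := j.2
      omega
    refine ⟨s.2.1.mul (u.2.1.pow 2), ?_⟩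
    rw [s.2.1.natDegree_mul (u.2.1.pow 2), s.2.2.1, u.2.1.natDegree_pow, u.2.2]
    omega⟩)
  constructor
  · rintro ⟨j, s, u⟩ ⟨j', s', u'⟩ h
    simp only [Subtype.mk_eq_mk] at h
    obtain ⟨hseq, hueq⟩ := sq_decomp_unique s.2.1 u.2.1 s'.2.1 u'.2.1 s.2.2.2 s'.2.2.2 h
    have hj : j = j' := by
      apply Fin.ext
      rw [← u.2.2, ← u'.2.2, hueq]
    subst hj
    refine congrArg (Sigma.mk j) ?_
    exact Prod.ext (Subtype.ext hseq) (Subtype.ext hueq)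
  · rintro ⟨g, hm, hd⟩
    obtain ⟨s, u, hsm, hum, hssf, hsu⟩ := exists_sq_decomp g.natDegree g hm rfl
    have hdeg : g.natDegree = s.natDegree + 2 * u.natDegree := by
      rw [hsu, hsm.natDegree_mul (hum.pow 2), hum.natDegree_pow]
    have hj : u.natDegree < n / 2 + 1 := by omega
    refine ⟨⟨⟨u.natDegree, hj⟩, ⟨s, hsm, by simp; omega, hssf⟩, ⟨u, hum, rfl⟩⟩, ?_⟩
    exact Subtype.ext hsu.symm

lemma card_recursion (F : Type*) [Field F] [Fintype F] (n : ℕ) :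
    Fintype.card F ^ n = ∑ j ∈ Finset.range (n / 2 + 1),
      Nat.card {g : F[X] // g.Monic ∧ g.natDegree = n - 2 * j ∧ Squarefree g} *
      Fintype.card F ^ j := by
  classical
  have h1 := card_monic F n
  rw [← Nat.card_congr (sqDecompEquiv F n)] at h1
  rw [← h1]
  haveI I1 : ∀ j : Fin (n / 2 + 1), Fintype
      {g : F[X] // g.Monic ∧ g.natDegree = n - 2 * (j : ℕ) ∧ Squarefree g} :=
    fun j => Fintype.ofFinite _
  haveI I2 : ∀ j : Fin (n / 2 + 1), Fintype
      {g : F[X] // g.Monic ∧ g.natDegree = (j : ℕ)} := fun j => Fintype.ofFinite _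
  rw [Nat.card_eq_fintype_card, Fintype.card_sigma,
    ← Fin.sum_univ_eq_sum_range (fun j => Nat.card
      {g : F[X] // g.Monic ∧ g.natDegree = n - 2 * j ∧ Squarefree g} *
      Fintype.card F ^ j) (n / 2 + 1)]
  apply Finset.sum_congr rfl
  intro j _
  rw [Fintype.card_prod, ← Nat.card_eq_fintype_card, ← Nat.card_eq_fintype_card, card_monic]

lemma sf_count_aux (F : Type*) [Field F] [Fintype F] :
    (∀ n, n ≤ 1 →
      Nat.card {g : F[X] // g.Monic ∧ g.natDegree = n ∧ Squarefree g} = Fintype.card F ^ n) ∧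
    (∀ n, 2 ≤ n →
      Nat.card {g : F[X] // g.Monic ∧ g.natDegree = n ∧ Squarefree g} =
        Fintype.card F ^ n - Fintype.card F ^ (n - 1)) := by
  set Q := Fintype.card F with hQdef
  set sf : ℕ → ℕ := fun m =>
    Nat.card {g : F[X] // g.Monic ∧ g.natDegree = m ∧ Squarefree g} with hsfdef
  have hrec : ∀ n, Q ^ n = ∑ j ∈ Finset.range (n / 2 + 1), sf (n - 2 * j) * Q ^ j :=
    card_recursion F
  have h0 : sf 0 = 1 := by have := hrec 0; simpa using this.symm
  have h1 : sf 1 = Q := by have := hrec 1; simpa using this.symm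
  have hQ1 : 1 ≤ Q := Fintype.card_pos
  have hmain : ∀ n, 2 ≤ n → Q ^ n = sf n + Q ^ (n - 1) := by
    intro n hn
    have e1 := hrec n
    have e2 := hrec (n - 2)
    rw [Finset.sum_range_succ'] at e1
    have hhalf : n / 2 = (n - 2) / 2 + 1 := by omega
    have e3 : ∑ i ∈ Finset.range (n / 2), sf (n - 2 * (i + 1)) * Q ^ (i + 1)
        = Q * ∑ j ∈ Finset.range ((n - 2) / 2 + 1), sf ((n - 2) - 2 * j) * Q ^ j := by
      rw [hhalf, Finset.mul_sum]
      apply Finset.sum_congr rfl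
      intro j _
      have hjj : n - 2 * (j + 1) = (n - 2) - 2 * j := by omega
      rw [hjj, pow_succ]
      ring
    rw [e3, ← e2] at e1
    have e4 : Q * Q ^ (n - 2) = Q ^ (n - 1) := by
      rw [← pow_succ']
      congr 1
      omega
    rw [e4] at e1
    simp only [mul_zero, Nat.sub_zero, pow_zero, mul_one] at e1
    omega
  refine ⟨?_, ?_⟩
  · intro n hn
    interval_cases n
    · simpa using h0
    · simpa using h1
  · intro n hn
    have hm := hmain n hn
    have hle : Q ^ (n - 1) ≤ Q ^ n := Nat.pow_le_pow_right hQ1 (by omega)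
    show sf n = Q ^ n - Q ^ (n - 1)
    omega

variable (K : Type*) [Field K] (p r : ℕ) [Fact p.Prime] [CharP K p]

def fixedSubfield : Subfield K where
  carrier := {x | x ^ p ^ r = x}
  mul_mem' := by
    intro a b ha hb
    simp only [Set.mem_setOf_eq] at *
    rw [mul_pow, ha, hb]
  one_mem' := by simp
  add_mem' := by
    intro a b ha hb
    simp only [Set.mem_setOf_eq] at *
    have := map_add (iterateFrobenius K p r) a b
    simp only [iterateFrobenius_def] at this
    rw [this, ha, hb]
  zero_mem' := by
    simp only [Set.mem_setOf_eq]
    exact zero_pow (pow_ne_zero r (Fact.out : p.Prime).ne_zero)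
  neg_mem' := by
    intro a ha
    simp only [Set.mem_setOf_eq] at *
    have := map_neg (iterateFrobenius K p r) a
    simp only [iterateFrobenius_def] at this
    rw [this, ha]
  inv_mem' := by
    intro a ha
    simp only [Set.mem_setOf_eq] at *
    rw [inv_pow, ha]

lemma mem_fixedSubfield (x : K) : x ∈ fixedSubfield K p r ↔ x ^ p ^ r = x := Iff.rfl

lemma fixedSubfield_finite [IsAlgClosed K] (hr : r ≠ 0) :
    Finite (fixedSubfield K p r) :=
  (fix_pow_finite_card K p r hr).1.to_subtype

lemma fixedSubfield_card [IsAlgClosed K] (hr : r ≠ 0) :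
    Nat.card (fixedSubfield K p r) = p ^ r := by
  have h := (fix_pow_finite_card K p r hr).2
  rw [← Nat.card_coe_set_eq] at h
  exact h

theorem bridge [IsAlgClosed K] (hr : r ≠ 0) (n : ℕ) :
    nSetCount (fun y : K => y ^ p ^ r) Set.univ n =
    Nat.card {g : (fixedSubfield K p r)[X] //
      g.Monic ∧ g.natDegree = n ∧ Squarefree g} := by
  classical
  set F := fixedSubfield K p r with hF
  haveI : Finite F := fixedSubfield_finite K p r hr
  set ι : F →+* K := F.subtype with hι
  have hinjι : Function.Injective ι := fun a b h => Subtype.ext h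
  set χ : K →+* K := iterateFrobenius K p r with hχdef
  have hχ : ∀ x : K, χ x = x ^ p ^ r := fun x => iterateFrobenius_def p r x
  have hcomp : χ.comp ι = ι := by
    ext a
    rw [RingHom.comp_apply, hχ]
    exact a.2
  have hinjpow : Function.Injective (fun y : K => y ^ p ^ r) := by
    have : (fun y : K => y ^ p ^ r) = ⇑χ := funext fun y => (hχ y).symm
    rw [this]
    exact χ.injective
  set A : Set (Set K) :=
    {S : Set K | S ⊆ Set.univ ∧ S.Finite ∧ S.ncard = n ∧ (fun y : K => y ^ p ^ r) '' S = S}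
    with hA
  set B := {g : F[X] // g.Monic ∧ g.natDegree = n ∧ Squarefree g} with hB
  -- the map from polynomials to root sets
  have hD : ∀ g : B, (↑(g.1.map ι).roots.toFinset : Set K) ∈ A := by
    rintro ⟨g, hgm, hgd, hgsf⟩
    have hgK0 : g.map ι ≠ 0 := (hgm.map ι).ne_zero
    have hsep : g.Separable := PerfectField.separable_iff_squarefree.mpr hgsf
    have hsepK : (g.map ι).Separable := hsep.map
    have hnodup := nodup_roots hsepK
    have hcardroots : Multiset.card (g.map ι).roots = n := by
      rw [← (IsAlgClosed.splits (g.map ι)).natDegree_eq_card_roots, natDegree_map, hgd]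
    have hfixg : (g.map ι).map χ = g.map ι := by
      rw [Polynomial.map_map, hcomp]
    have hroot : ∀ z ∈ (g.map ι).roots, z ^ p ^ r ∈ (g.map ι).roots := by
      intro z hz
      rw [mem_roots hgK0] at hz ⊢
      have : eval (χ z) (g.map ι) = χ (eval z (g.map ι)) := by
        conv_lhs => rw [← hfixg]
        rw [eval_map, eval₂_hom]
      have hz0 : Polynomial.eval z (g.map ι) = 0 := hz
      rw [IsRoot.def, ← hχ z, this, hz0, map_zero]
    refine ⟨Set.subset_univ _, Finset.finite_toSet _, ?_, ?_⟩
    · rw [Set.ncard_coe_finset, Multiset.toFinset_card_of_nodup hnodup, hcardroots]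
    · apply Set.eq_of_subset_of_ncard_le
      · rintro y ⟨z, hz, rfl⟩
        simp only [Finset.coe_sort_coe, Multiset.mem_toFinset, Finset.mem_coe] at hz ⊢
        exact hroot z hz
      · rw [Set.ncard_image_of_injective _ hinjpow]
      · exact Finset.finite_toSet _
  have hbij : Function.Bijective (fun g : B => (⟨_, hD g⟩ : A)) := by
    constructor
    · rintro g g' hgg
      have heq : ((g.1.map ι).roots.toFinset : Set K) = ((g'.1.map ι).roots.toFinset : Set K) :=
        congrArg Subtype.val hgg
      have heqf : (g.1.map ι).roots.toFinset = (g'.1.map ι).roots.toFinset := by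
        exact_mod_cast Finset.coe_injective heq
      have hsep : ∀ h : B, (h.1.map ι).roots.Nodup :=
        fun h => nodup_roots ((PerfectField.separable_iff_squarefree.mpr h.2.2.2).map)
      have hroots : (g.1.map ι).roots = (g'.1.map ι).roots := by
        have h1 : (g.1.map ι).roots.toFinset.val = (g.1.map ι).roots := by
          rw [Multiset.toFinset_val, (hsep g).dedup]
        have h2 : (g'.1.map ι).roots.toFinset.val = (g'.1.map ι).roots := by
          rw [Multiset.toFinset_val, (hsep g').dedup]
        rw [← h1, ← h2, heqf]
      have hprod : g.1.map ι = g'.1.map ι := by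
        rw [(IsAlgClosed.splits (g.1.map ι)).eq_prod_roots_of_monic (g.2.1.map ι),
          (IsAlgClosed.splits (g'.1.map ι)).eq_prod_roots_of_monic (g'.2.1.map ι),
          hroots]
      exact Subtype.ext (Polynomial.map_injective ι hinjι hprod)
    · rintro ⟨S, hSu, hSfin, hScard, hSstab⟩
      set T := hSfin.toFinset with hT
      set PS : K[X] := ∏ x ∈ T, (X - C x) with hPS
      have hPSmonic : PS.Monic := monic_prod_of_monic _ _ (fun x _ => monic_X_sub_C x)
      have hPSdeg : PS.natDegree = n := by
        rw [hPS, natDegree_prod_of_monic _ _ (fun x _ => monic_X_sub_C x)]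
        simp only [natDegree_X_sub_C, Finset.sum_const, smul_eq_mul, mul_one]
        rw [hT, ← Set.ncard_eq_toFinset_card S hSfin]
        exact hScard
      have himg : T.image (fun y : K => y ^ p ^ r) = T := by
        ext y
        simp only [Finset.mem_image, Set.Finite.mem_toFinset, hT]
        constructor
        · rintro ⟨x, hx, rfl⟩
          have : (x : K) ^ p ^ r ∈ (fun y : K => y ^ p ^ r) '' S := ⟨x, hx, rfl⟩
          rwa [hSstab] at this
        · intro hy
          rw [← hSstab] at hy
          obtain ⟨x, hx, rfl⟩ := hy
          exact ⟨x, hx, rfl⟩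
      have hmapPS : PS.map χ = PS := by
        rw [hPS, Polynomial.map_prod]
        have h1 : ∀ x : K, (X - C x).map χ = X - C (x ^ p ^ r) := by
          intro x
          rw [Polynomial.map_sub, map_X, map_C, hχ]
        have h2 : ∏ y ∈ T.image (fun y : K => y ^ p ^ r), (X - C y)
            = ∏ x ∈ T, (X - C (x ^ p ^ r)) :=
          Finset.prod_image (fun x _ y _ h => hinjpow h)
        calc ∏ x ∈ T, (X - C x).map χ = ∏ x ∈ T, (X - C (x ^ p ^ r)) :=
              Finset.prod_congr rfl (fun x _ => h1 x)
          _ = ∏ y ∈ T.image (fun y : K => y ^ p ^ r), (X - C y) := h2.symm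
          _ = ∏ x ∈ T, (X - C x) := by rw [himg]
      have hcoeff : ∀ i, PS.coeff i ∈ F := by
        intro i
        have := congrArg (fun q => Polynomial.coeff q i) hmapPS
        simp only [Polynomial.coeff_map] at this
        rw [mem_fixedSubfield, ← hχ]
        exact this
      set g : F[X] := ∑ i ∈ PS.support, (C (⟨PS.coeff i, hcoeff i⟩ : F)) * X ^ i with hg
      have hmapg : g.map ι = PS := by
        rw [hg, Polynomial.map_sum]
        simp only [Polynomial.map_mul, map_C, Polynomial.map_pow, map_X]
        conv_rhs => rw [Polynomial.as_sum_support PS]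
        apply Finset.sum_congr rfl
        intro i _
        rw [Polynomial.C_mul_X_pow_eq_monomial]
        rfl
      have hgmonic : g.Monic := Polynomial.monic_of_injective hinjι (by rw [hmapg]; exact hPSmonic)
      have hgdeg : g.natDegree = n := by
        have : (g.map ι).natDegree = g.natDegree := natDegree_map ι
        rw [hmapg, hPSdeg] at this
        exact this.symm
      have hgsf : Squarefree g := by
        have hPSsep : PS.Separable := by
          rw [hPS]
          exact separable_prod_X_sub_C_iff'.mpr (fun x _ y _ h => h)
        have hPSsf : Squarefree PS := hPSsep.squarefree
        intro a ha
        have hdvd : (a.map ι) * (a.map ι) ∣ PS := by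
          rw [← hmapg, ← Polynomial.map_mul]
          exact Polynomial.map_dvd ι ha
        exact (Polynomial.isUnit_map ι).mp (hPSsf _ hdvd)
      refine ⟨⟨g, hgmonic, hgdeg, hgsf⟩, ?_⟩
      apply Subtype.ext
      show ((g.map ι).roots.toFinset : Set K) = S
      rw [hmapg, hPS, roots_prod_X_sub_C, Finset.val_toFinset, hT, Set.Finite.coe_toFinset]
  have hcount : nSetCount (fun y : K => y ^ p ^ r) Set.univ n = A.ncard := rfl
  rw [hcount, ← Nat.card_coe_set_eq, ← Nat.card_congr (Equiv.ofBijective _ hbij)]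

section glue
variable (k : Type*) [Field k] [Fintype k]

lemma afFrob_iterate (N m : ℕ) (v : Fin N → AlgebraicClosure k) :
    (afFrob k N)^[m] v = fun i => v i ^ Fintype.card k ^ m := by
  induction m with
  | zero => simp
  | succ m ih =>
    rw [Function.iterate_succ_apply', ih]
    funext i
    show (v i ^ Fintype.card k ^ m) ^ Fintype.card k = _
    rw [← pow_mul, ← pow_succ]

lemma powQ_iterate (K : Type*) [Monoid K] (Q m : ℕ) (y : K) :
    (fun y : K => y ^ Q)^[m] y = y ^ Q ^ m := by
  induction m with
  | zero => simp
  | succ m ih =>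
    rw [Function.iterate_succ_apply', ih]
    show (y ^ Q ^ m) ^ Q = _
    rw [← pow_mul, ← pow_succ]

lemma afFrob_periodic (N : ℕ) (v : Fin N → AlgebraicClosure k) :
    v ∈ periodicPts (afFrob k N) := by
  classical
  choose m hm0 hm using fun i => exists_pow_card_pow_eq k (v i)
  set M : ℕ := ∏ i : Fin N, m i with hM
  have hM0 : M ≠ 0 := Finset.prod_ne_zero_iff.mpr (fun i _ => hm0 i)
  refine ⟨M, Nat.pos_of_ne_zero hM0, ?_⟩
  show (afFrob k N)^[M] v = v
  rw [afFrob_iterate]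
  funext i
  exact pow_pow_of_dvd (v i) _ (m i) M (hm i) (Finset.dvd_prod_of_mem m (Finset.mem_univ i))

lemma powQ_periodic (N : ℕ) (hN : N ≠ 0) (y : AlgebraicClosure k) :
    y ∈ periodicPts (fun z : AlgebraicClosure k => z ^ Fintype.card k ^ N) := by
  obtain ⟨m, hm0, hm⟩ := exists_pow_card_pow_eq k y
  refine ⟨m, Nat.pos_of_ne_zero hm0, ?_⟩
  show (fun z : AlgebraicClosure k => z ^ Fintype.card k ^ N)^[m] y = y
  rw [powQ_iterate]
  rw [← pow_mul]
  exact pow_pow_of_dvd y _ m (N * m) hm ⟨N, by ring⟩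

end glue

end

end AfCount

open AfCount in
/-- For `N ≥ 1` and `n ≥ 0`, the number `a(n)` of `n`-element subsets
`S ⊆ k̄^N` with `σ(S) = S` is `q^{nN}` if `n ≤ 1` and
`q^{nN} − q^{(n−1)N}` if `n ≥ 2`. -/
theorem stmt1 (k : Type*) [Field k] [Fintype k] (q N n : ℕ)
    (hq : Fintype.card k = q) (hN : 1 ≤ N) :
    (n ≤ 1 → nSetCount (afFrob k N) Set.univ n = q ^ (n * N)) ∧
    (2 ≤ n → nSetCount (afFrob k N) Set.univ n = q ^ (n * N) - q ^ ((n - 1) * N)) := by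
  classical
  subst hq
  set K := AlgebraicClosure k with hK
  set q := Fintype.card k with hq
  haveI : CharP k (ringChar k) := ringChar.charP k
  haveI hfact : Fact (ringChar k).Prime := ⟨CharP.char_is_prime k (ringChar k)⟩
  set p := ringChar k with hp
  haveI : CharP K p := charP_of_injective_algebraMap (algebraMap k K).injective p
  obtain ⟨r, -, hqr⟩ := FiniteField.card k p
  rw [← hq] at hqr
  have hr0 : (r : ℕ) ≠ 0 := r.pos.ne'
  have hN0 : N ≠ 0 := by omega
  -- the two systems
  set σX : (Fin N → K) → (Fin N → K) := afFrob k N with hσX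
  set σY : K → K := fun y : K => y ^ q ^ N with hσY
  -- fixed point sets
  have hfixX : ∀ m : ℕ, m ≠ 0 → fixSet σX m = Set.univ.pi
      (fun _ : Fin N => {y : K | y ^ q ^ m = y}) := by
    intro m hm
    ext v
    simp only [AfCount.fixSet, Set.mem_setOf_eq, Set.mem_pi, Set.mem_univ, forall_true_left,
      true_implies]
    rw [hσX, afFrob_iterate]
    constructor
    · intro h i
      exact congrFun h i
    · intro h; funext i; exact h i
  have hfixY : ∀ m : ℕ, m ≠ 0 → fixSet σY m = {y : K | y ^ q ^ (N * m) = y} := by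
    intro m hm
    ext y
    simp only [AfCount.fixSet, Set.mem_setOf_eq]
    rw [hσY, powQ_iterate, ← pow_mul]
  -- cardinalities of scalar fixed sets
  have hscalar : ∀ j : ℕ, j ≠ 0 →
      {y : K | y ^ q ^ j = y}.Finite ∧ {y : K | y ^ q ^ j = y}.ncard = q ^ j := by
    intro j hj
    have hconv : q ^ j = p ^ ((r : ℕ) * j) := by rw [hqr, ← pow_mul]
    have := fix_pow_finite_card K p ((r : ℕ) * j) (by positivity)
    rw [← hconv] at this
    exact this
  have hfinX : ∀ m : ℕ, m ≠ 0 → (fixSet σX m).Finite := by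
    intro m hm
    rw [hfixX m hm]
    exact Set.Finite.pi (fun _ => (hscalar m hm).1)
  have hfinY : ∀ m : ℕ, m ≠ 0 → (fixSet σY m).Finite := by
    intro m hm
    rw [hfixY m hm]
    exact (hscalar (N * m) (by positivity)).1
  have hcardX : ∀ m : ℕ, m ≠ 0 → (fixSet σX m).ncard = q ^ (m * N) := by
    intro m hm
    rw [hfixX m hm, ← Nat.card_coe_set_eq,
      Nat.card_congr (Equiv.Set.univPi (fun _ : Fin N => {y : K | y ^ q ^ m = y})),
      Nat.card_pi]
    simp only [Nat.card_coe_set_eq, (hscalar m hm).2]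
    rw [Finset.prod_const, Finset.card_univ, Fintype.card_fin, ← pow_mul]
  have hcard : ∀ m : ℕ, m ≠ 0 → (fixSet σX m).ncard = (fixSet σY m).ncard := by
    intro m hm
    rw [hcardX m hm, hfixY m hm, (hscalar (N * m) (by positivity)).2, mul_comm]
  -- transport
  obtain ⟨e, he⟩ := exists_equivariant_equiv σX σY
    (fun v => afFrob_periodic k N v) (fun y => powQ_periodic k N hN0 y)
    hfinX hfinY hcard
  have htrans : nSetCount σX Set.univ n = nSetCount σY Set.univ n :=
    nSetCount_congr σX σY e he n
  -- bridge to polynomial counting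
  have hσY' : σY = fun y : K => y ^ p ^ ((r : ℕ) * N) := by
    funext y
    rw [hσY, hqr, ← pow_mul]
  have hrN : (r : ℕ) * N ≠ 0 := by positivity
  have hbridge : nSetCount σY Set.univ n =
      Nat.card {g : (fixedSubfield K p ((r : ℕ) * N))[X] //
        g.Monic ∧ g.natDegree = n ∧ Squarefree g} := by
    rw [hσY']
    exact bridge K p ((r : ℕ) * N) hrN n
  -- counting
  set F := fixedSubfield K p ((r : ℕ) * N) with hFdef
  haveI : Finite F := fixedSubfield_finite K p ((r : ℕ) * N) hrN
  haveI : Fintype F := Fintype.ofFinite _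
  have hFcard : Fintype.card F = p ^ ((r : ℕ) * N) := by
    rw [← Nat.card_eq_fintype_card]
    exact fixedSubfield_card K p ((r : ℕ) * N) hrN
  obtain ⟨hsf1, hsf2⟩ := sf_count_aux F
  have hpow : ∀ a : ℕ, Fintype.card F ^ a = q ^ (a * N) := by
    intro a
    rw [hFcard, hqr, ← pow_mul, ← pow_mul]
    ring_nf
  constructor
  · intro hn
    rw [htrans, hbridge, hsf1 n hn, hpow n]
  · intro hn
    rw [htrans, hbridge, hsf2 n hn, hpow n, hpow (n - 1)]
end

section
/- Let γ ∈ GL_{N+1}(𝔽_q), regarded as a k̄-linear automorphism of k̄^{N+1}. If V and W are two proper γ-invariant subspaces with exp V = exp W, then either V ∩ W = 0 or V = W. (Geometrically: two proper γ-invariant linear subvarieties of ℙ^N(k̄) of the same exponent are either disjoint or coincident.) -/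
/-- The `k̄`-linear endomorphism of `k̄^m` induced by a matrix
`γ ∈ GL_m(𝔽_q)` via base extension. -/
noncomputable def matEnd (k : Type*) [Field k] [Fintype k] (m : ℕ)
    (γ : Matrix.GeneralLinearGroup (Fin m) k) :
    Module.End (AlgebraicClosure k) (Fin m → AlgebraicClosure k) :=
  Matrix.mulVecLin
    ((γ : Matrix (Fin m) (Fin m) k).map (algebraMap k (AlgebraicClosure k)))

/-- `V` is a `γ`-invariant subspace: `γ(V) = V`. -/
def IsInvt (k : Type*) [Field k] [Fintype k] (m : ℕ)
    (γ : Matrix.GeneralLinearGroup (Fin m) k)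
    (V : Submodule (AlgebraicClosure k) (Fin m → AlgebraicClosure k)) : Prop :=
  Submodule.map (matEnd k m γ) V = V

/-- The exponent of `V`: the least `e ≥ 1` such that `γ^e` acts on `V` as
multiplication by a scalar. -/
noncomputable def expV (k : Type*) [Field k] [Fintype k] (m : ℕ)
    (γ : Matrix.GeneralLinearGroup (Fin m) k)
    (V : Submodule (AlgebraicClosure k) (Fin m → AlgebraicClosure k)) : ℕ :=
  sInf {e : ℕ | 1 ≤ e ∧ ∃ c : AlgebraicClosure k,
    ∀ v ∈ V, (matEnd k m γ ^ e) v = c • v}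

/-- `V` is a proper `γ`-invariant subspace: `V` is nonzero, `γ`-invariant,
and every `γ`-invariant subspace strictly containing `V` has strictly larger
exponent. -/
def IsProper (k : Type*) [Field k] [Fintype k] (m : ℕ)
    (γ : Matrix.GeneralLinearGroup (Fin m) k)
    (V : Submodule (AlgebraicClosure k) (Fin m → AlgebraicClosure k)) : Prop :=
  V ≠ ⊥ ∧ IsInvt k m γ V ∧
    ∀ W : Submodule (AlgebraicClosure k) (Fin m → AlgebraicClosure k),
      W ≠ ⊥ → IsInvt k m γ W → V < W → expV k m γ V < expV k m γ W

/-!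
If `V ⊓ W ≠ 0` and `e = exp V = exp W`, then `γ^e` acts on `V` and on `W` by scalars which agree
on a common nonzero vector, hence `γ^e` is a scalar on the invariant subspace `V ⊔ W`, so
`exp (V ⊔ W) ≤ e`. Properness of `V` and of `W` then forces `V = V ⊔ W = W`.
-/

theorem Module.End.apply_eq_smul_on_sup {K M : Type*} [Field K] [AddCommGroup M] [Module K M]
    (f : Module.End K M) {V W : Submodule K M} {c c' : K}
    (hV : ∀ v ∈ V, f v = c • v) (hW : ∀ w ∈ W, f w = c' • w) (hVW : V ⊓ W ≠ ⊥) :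
    ∀ u ∈ V ⊔ W, f u = c • u := by
  obtain ⟨x, hx, hx0⟩ := Submodule.exists_mem_ne_zero_of_ne_bot hVW
  have hcc' : c = c' :=
    smul_left_injective K hx0 <| (hV x (Submodule.mem_inf.mp hx).1).symm.trans
      (hW x (Submodule.mem_inf.mp hx).2)
  subst hcc'
  intro u hu
  obtain ⟨v, hv, w, hw, rfl⟩ := Submodule.mem_sup.mp hu
  rw [map_add, hV v hv, hW w hw, smul_add]

section

variable {k : Type*} [Field k] [Fintype k] {m : ℕ} {γ : Matrix.GeneralLinearGroup (Fin m) k}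
  {V W : Submodule (AlgebraicClosure k) (Fin m → AlgebraicClosure k)}

theorem matEnd_pow (γ : Matrix.GeneralLinearGroup (Fin m) k) (n : ℕ) :
    matEnd k m γ ^ n = matEnd k m (γ ^ n) :=
  let φ : Matrix.GeneralLinearGroup (Fin m) k →*
      Module.End (AlgebraicClosure k) (Fin m → AlgebraicClosure k) :=
    ((Matrix.toLinAlgEquiv' (R := AlgebraicClosure k) (n := Fin m)).toRingHom.toMonoidHom.comp
      (algebraMap k (AlgebraicClosure k)).mapMatrix.toMonoidHom).comp (Units.coeHom _)
  (map_pow φ γ n).symm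

theorem matEnd_pow_orderOf (γ : Matrix.GeneralLinearGroup (Fin m) k) :
    matEnd k m γ ^ orderOf γ = 1 := by
  rw [matEnd_pow, pow_orderOf_eq_one]
  ext
  simp [matEnd]

theorem expV_spec (γ : Matrix.GeneralLinearGroup (Fin m) k)
    (V : Submodule (AlgebraicClosure k) (Fin m → AlgebraicClosure k)) :
    1 ≤ expV k m γ V ∧ ∃ c : AlgebraicClosure k,
      ∀ v ∈ V, (matEnd k m γ ^ expV k m γ V) v = c • v :=
  Nat.sInf_mem (s := {e | 1 ≤ e ∧ ∃ c : AlgebraicClosure k,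
      ∀ v ∈ V, (matEnd k m γ ^ e) v = c • v})
    ⟨orderOf γ, orderOf_pos γ, 1, fun _ _ => by simp [matEnd_pow_orderOf]⟩

theorem expV_le {e : ℕ} (he : 1 ≤ e) {c : AlgebraicClosure k}
    (hV : ∀ v ∈ V, (matEnd k m γ ^ e) v = c • v) : expV k m γ V ≤ e :=
  Nat.sInf_le ⟨he, c, hV⟩

theorem IsInvt.sup (hV : IsInvt k m γ V) (hW : IsInvt k m γ W) : IsInvt k m γ (V ⊔ W) := by
  rw [IsInvt, Submodule.map_sup, hV, hW]

theorem IsProper.eq_of_le (hV : IsProper k m γ V) (hW : IsInvt k m γ W) (hVW : V ≤ W)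
    (hexp : expV k m γ W ≤ expV k m γ V) : V = W := by
  by_contra hne
  exact (hV.2.2 W (ne_bot_of_le_ne_bot hV.1 hVW) hW (lt_of_le_of_ne hVW hne)).not_ge hexp

theorem expV_sup_le (hVW : V ⊓ W ≠ ⊥) (hexp : expV k m γ V = expV k m γ W) :
    expV k m γ (V ⊔ W) ≤ expV k m γ V := by
  obtain ⟨he, c, hc⟩ := expV_spec γ V
  obtain ⟨-, c', hc'⟩ := expV_spec γ W
  rw [← hexp] at hc'
  exact expV_le he (Module.End.apply_eq_smul_on_sup _ hc hc' hVW)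

end

/-- Two proper `γ`-invariant subspaces of `k̄^{N+1}` with the same exponent
are either disjoint (intersection `0`) or coincident. -/
theorem stmt15 (k : Type*) [Field k] [Fintype k] (N : ℕ)
    (γ : Matrix.GeneralLinearGroup (Fin (N + 1)) k)
    (V W : Submodule (AlgebraicClosure k) (Fin (N + 1) → AlgebraicClosure k))
    (hV : IsProper k (N + 1) γ V) (hW : IsProper k (N + 1) γ W)
    (hexp : expV k (N + 1) γ V = expV k (N + 1) γ W) :
    V ⊓ W = ⊥ ∨ V = W := by
  refine or_iff_not_imp_left.mpr fun hVW => ?_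
  have hsup : IsInvt k (N + 1) γ (V ⊔ W) := hV.2.1.sup hW.2.1
  have hsupV := expV_sup_le hVW hexp
  have hsupW : expV k (N + 1) γ (V ⊔ W) ≤ expV k (N + 1) γ W := hexp ▸ hsupV
  calc V = V ⊔ W := hV.eq_of_le hsup le_sup_left hsupV
    _ = W := (hW.eq_of_le hsup le_sup_right hsupW).symm
end

section
/- Let γ ∈ GL_{N+1}(𝔽_q) and let V ⊆ k̄^{N+1} be a proper γ-invariant subspace of degree r, i.e. r is the least positive integer with σ^r(V) = V. Set V_G = ℙ(V) ∪ ℙ(σ(V)) ∪ ⋯ ∪ ℙ(σ^{r−1}(V)) ⊆ ℙ^N(k̄). Then for every integer m ≥ 1: if r does not divide m, then no point of V_G is fixed by σ^m; and if r divides m, then the number of points of V_G fixed by σ^m equals r times the number of points of ℙ(V) fixed by σ^m. (Equivalently, Z(V_G/k, x) = Z(V/k_r, x^r), where k_r = 𝔽_{q^r}.) -/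
/-- The `q`-power Frobenius acting on `ℙ^{m-1}(k̄)` (raising homogeneous
coordinates to the `q`-th power), where `q = |k|`. -/
noncomputable def projFrob (k : Type*) [Field k] [Fintype k] (m : ℕ) :
    Projectivization (AlgebraicClosure k) (Fin m → AlgebraicClosure k) →
    Projectivization (AlgebraicClosure k) (Fin m → AlgebraicClosure k) :=
  fun P => Projectivization.mk (AlgebraicClosure k)
    (fun i => (P.rep i) ^ (Fintype.card k)) (by
      intro h
      apply P.rep_nonzero
      funext i
      have hi : P.rep i ^ (Fintype.card k) = 0 := by simpa using congrFun h i
      simpa using pow_eq_zero_iff (Fintype.card_ne_zero (α := k)) |>.mp hi)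

/-- The set of projective points whose representatives lie in a (scalar
closed) set `A ⊆ k̄^m` of vectors: the projectivization `ℙ(A)`. -/
def projSet (k : Type*) [Field k] [Fintype k] (m : ℕ)
    (A : Set (Fin m → AlgebraicClosure k)) :
    Set (Projectivization (AlgebraicClosure k) (Fin m → AlgebraicClosure k)) :=
  {P | P.rep ∈ A}


open Function Set

namespace S18

noncomputable def phi (k : Type*) [Field k] [Fintype k] :
    AlgebraicClosure k →+* AlgebraicClosure k where
  toFun x := x ^ Fintype.card k
  map_one' := one_pow _
  map_mul' x y := mul_pow x y _
  map_zero' := zero_pow Fintype.card_ne_zero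
  map_add' x y := by
    haveI := ringChar.charP k
    obtain ⟨n, hp, hn⟩ := FiniteField.card k (ringChar k)
    haveI : Fact (ringChar k).Prime := ⟨hp⟩
    haveI : ExpChar (AlgebraicClosure k) (ringChar k) := .prime hp
    simp only [hn]
    exact add_pow_expChar_pow x y _ (n : ℕ)

variable {k : Type*} [Field k] [Fintype k] {m : ℕ}

theorem phi_apply (x : AlgebraicClosure k) : phi k x = x ^ Fintype.card k := rfl

theorem phi_surjective : Function.Surjective (phi k) := fun x => by
  obtain ⟨z, hz⟩ := IsAlgClosed.exists_pow_nat_eq x (n := Fintype.card k) Fintype.card_pos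
  exact ⟨z, hz⟩

theorem phi_injective : Function.Injective (phi k) := (phi k).injective

theorem phi_iter_apply (j : ℕ) (x : AlgebraicClosure k) :
    (phi k)^[j] x = x ^ (Fintype.card k ^ j) := by
  induction j generalizing x with
  | zero => simp
  | succ j ih =>
    rw [Function.iterate_succ_apply, ih, phi_apply, ← pow_mul, pow_succ]
    ring_nf

theorem afFrob_apply (v : Fin m → AlgebraicClosure k) (i : Fin m) :
    afFrob k m v i = phi k (v i) := rfl

theorem afFrob_iter_apply (j : ℕ) (v : Fin m → AlgebraicClosure k) (i : Fin m) :
    (afFrob k m)^[j] v i = (phi k)^[j] (v i) := by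
  induction j generalizing v with
  | zero => rfl
  | succ j ih =>
    rw [Function.iterate_succ_apply, Function.iterate_succ_apply, ih, afFrob_apply]

theorem afFrob_iter_add (j : ℕ) (v w : Fin m → AlgebraicClosure k) :
    (afFrob k m)^[j] (v + w) = (afFrob k m)^[j] v + (afFrob k m)^[j] w := by
  funext i
  simp [afFrob_iter_apply, iterate_map_add]

theorem afFrob_iter_zero (j : ℕ) :
    (afFrob k m)^[j] (0 : Fin m → AlgebraicClosure k) = 0 := by
  funext i
  simp [afFrob_iter_apply]

theorem afFrob_iter_smul (j : ℕ) (c : AlgebraicClosure k) (v : Fin m → AlgebraicClosure k) :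
    (afFrob k m)^[j] (c • v) = ((phi k)^[j] c) • (afFrob k m)^[j] v := by
  funext i
  simp [afFrob_iter_apply, iterate_map_mul]

theorem afFrob_injective : Function.Injective (afFrob k m) := by
  intro v w h
  funext i
  exact phi_injective (congrFun h i)

theorem afFrob_iter_injective (j : ℕ) : Function.Injective ((afFrob k m)^[j]) :=
  afFrob_injective.iterate j

theorem afFrob_iter_ne_zero (j : ℕ) {v : Fin m → AlgebraicClosure k} (hv : v ≠ 0) :
    (afFrob k m)^[j] v ≠ 0 := fun h =>
  hv (afFrob_iter_injective j (h.trans (afFrob_iter_zero j).symm))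

-- new content below --

theorem matEnd_comm (γ : Matrix.GeneralLinearGroup (Fin m) k) (v : Fin m → AlgebraicClosure k) :
    matEnd k m γ (afFrob k m v) = afFrob k m (matEnd k m γ v) := by
  funext i
  show _ = phi k ((matEnd k m γ v) i)
  simp only [matEnd, Matrix.mulVecLin_apply, Matrix.mulVec, dotProduct,
    Matrix.map_apply]
  rw [map_sum]
  refine Finset.sum_congr rfl fun j _ => ?_
  rw [map_mul]
  congr 1
  rw [phi_apply, ← map_pow, FiniteField.pow_card]

theorem matEnd_one : matEnd k m (1 : Matrix.GeneralLinearGroup (Fin m) k) = 1 := by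
  rw [matEnd, Units.val_one, Matrix.map_one _ (map_zero _) (map_one _), Matrix.mulVecLin_one]
  rfl

theorem matEnd_mul (γ₁ γ₂ : Matrix.GeneralLinearGroup (Fin m) k) :
    matEnd k m (γ₁ * γ₂) = matEnd k m γ₁ * matEnd k m γ₂ := by
  rw [matEnd, Units.val_mul, Matrix.map_mul, Matrix.mulVecLin_mul]
  rfl

theorem matEnd_pow (γ : Matrix.GeneralLinearGroup (Fin m) k) (e : ℕ) :
    matEnd k m (γ ^ e) = (matEnd k m γ) ^ e := by
  induction e with
  | zero => rw [pow_zero, pow_zero, matEnd_one]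
  | succ e ih => rw [pow_succ, pow_succ, matEnd_mul, ih]

theorem matEnd_iter_comm (γ : Matrix.GeneralLinearGroup (Fin m) k) (e : ℕ)
    (v : Fin m → AlgebraicClosure k) :
    (⇑(matEnd k m γ))^[e] (afFrob k m v) = afFrob k m ((⇑(matEnd k m γ))^[e] v) := by
  induction e generalizing v with
  | zero => rfl
  | succ e ih =>
    rw [Function.iterate_succ_apply', Function.iterate_succ_apply', ih, matEnd_comm]

theorem matEnd_pow_comm (γ : Matrix.GeneralLinearGroup (Fin m) k) (e d : ℕ)
    (v : Fin m → AlgebraicClosure k) :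
    (matEnd k m γ ^ e) ((afFrob k m)^[d] v) = (afFrob k m)^[d] ((matEnd k m γ ^ e) v) := by
  rw [Module.End.pow_apply, Module.End.pow_apply]
  induction d generalizing v with
  | zero => rfl
  | succ d ih =>
    rw [Function.iterate_succ_apply, Function.iterate_succ_apply, ih, matEnd_iter_comm]

theorem expV_spec (γ : Matrix.GeneralLinearGroup (Fin m) k)
    (V : Submodule (AlgebraicClosure k) (Fin m → AlgebraicClosure k)) :
    1 ≤ expV k m γ V ∧ ∃ c : AlgebraicClosure k,
      ∀ v ∈ V, (matEnd k m γ ^ expV k m γ V) v = c • v := by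
  have hne : {e : ℕ | 1 ≤ e ∧ ∃ c : AlgebraicClosure k,
      ∀ v ∈ V, (matEnd k m γ ^ e) v = c • v}.Nonempty := by
    refine ⟨orderOf γ, orderOf_pos γ, 1, fun v hv => ?_⟩
    rw [← matEnd_pow, pow_orderOf_eq_one, matEnd_one, one_smul]
    rfl
  exact Nat.sInf_mem hne

/-- The image of `V` under `σ^[j]` as a submodule. -/
noncomputable def sigmaSub (j : ℕ)
    (V : Submodule (AlgebraicClosure k) (Fin m → AlgebraicClosure k)) :
    Submodule (AlgebraicClosure k) (Fin m → AlgebraicClosure k) where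
  carrier := (afFrob k m)^[j] '' V
  add_mem' := by
    rintro a b ⟨x, hx, rfl⟩ ⟨y, hy, rfl⟩
    exact ⟨x + y, V.add_mem hx hy, afFrob_iter_add j x y⟩
  zero_mem' := ⟨0, V.zero_mem, afFrob_iter_zero j⟩
  smul_mem' := by
    rintro c a ⟨x, hx, rfl⟩
    obtain ⟨c₀, rfl⟩ := (phi_surjective (k := k)).iterate j c
    exact ⟨c₀ • x, V.smul_mem c₀ hx, afFrob_iter_smul j c₀ x⟩

theorem coe_sigmaSub (j : ℕ)
    (V : Submodule (AlgebraicClosure k) (Fin m → AlgebraicClosure k)) :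
    (sigmaSub j V : Set (Fin m → AlgebraicClosure k)) = (afFrob k m)^[j] '' V := rfl


theorem iter_image_add (a b : ℕ) (S : Set (Fin m → AlgebraicClosure k)) :
    (afFrob k m)^[a + b] '' S = (afFrob k m)^[a] '' ((afFrob k m)^[b] '' S) := by
  rw [Function.iterate_add, Set.image_comp]

theorem iter_image_mul_left {r : ℕ}
    {V : Set (Fin m → AlgebraicClosure k)}
    (hrV : (afFrob k m)^[r] '' V = V) (t : ℕ) :
    (afFrob k m)^[r * t] '' V = V := by
  induction t with
  | zero => simp
  | succ t ih =>
    have : r * (t + 1) = r * t + r := by ring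
    rw [this, iter_image_add, hrV, ih]

theorem iter_image_mod {r : ℕ} (hr : 0 < r)
    {V : Set (Fin m → AlgebraicClosure k)}
    (hrV : (afFrob k m)^[r] '' V = V) (a : ℕ) :
    (afFrob k m)^[a] '' V = (afFrob k m)^[a % r] '' V := by
  conv_lhs => rw [← Nat.mod_add_div a r]
  rw [iter_image_add, iter_image_mul_left hrV]

/-- Key disjointness: a vector in both `V` and `σ^d(V)` with `σ^d(V) ≠ V` is zero. -/
theorem inter_triv (γ : Matrix.GeneralLinearGroup (Fin m) k)
    (V : Submodule (AlgebraicClosure k) (Fin m → AlgebraicClosure k))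
    (hV : IsProper k m γ V) (r : ℕ) (hr : 0 < r)
    (hrV : (afFrob k m)^[r] '' (V : Set (Fin m → AlgebraicClosure k)) = V)
    (d : ℕ) (hd0 : 0 < d)
    (hdne : (afFrob k m)^[d] '' (V : Set (Fin m → AlgebraicClosure k)) ≠ V)
    {u : Fin m → AlgebraicClosure k} (hu1 : u ∈ V)
    (hu2 : u ∈ (afFrob k m)^[d] '' (V : Set (Fin m → AlgebraicClosure k))) : u = 0 := by
  by_contra hu0
  set W := sigmaSub d V with hWdef
  set e := expV k m γ V with hedef
  obtain ⟨he1, c, hc⟩ := expV_spec γ V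
  -- γ^e acts as the scalar φ^d(c) on W
  have hW : ∀ w ∈ W, (matEnd k m γ ^ e) w = ((phi k)^[d] c) • w := by
    rintro w ⟨x, hx, rfl⟩
    rw [matEnd_pow_comm, hc x hx, afFrob_iter_smul]
  -- the two scalars agree
  have hcc : (phi k)^[d] c = c := by
    obtain ⟨i, hi⟩ : ∃ i, u i ≠ 0 := by
      by_contra h
      push_neg at h
      exact hu0 (funext h)
    have h1 := hc u hu1
    have h2 := hW u hu2
    have := congrFun (h2.symm.trans h1) i
    simpa using mul_right_cancel₀ hi this
  -- V is strictly contained in V ⊔ W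
  have hVW : V < V ⊔ W := by
    refine lt_of_le_of_ne le_sup_left fun h => ?_
    have hWV : ((afFrob k m)^[d] '' (V : Set (Fin m → AlgebraicClosure k)))
        ⊆ (V : Set (Fin m → AlgebraicClosure k)) := by
      intro x hx
      have hx' : x ∈ V ⊔ W := Submodule.mem_sup_right hx
      rwa [← h] at hx'
    apply hdne
    refine subset_antisymm hWV ?_
    -- V ⊆ σ^d(V): chain argument
    have step : ∀ t : ℕ, ((afFrob k m)^[t * d] '' (V : Set (Fin m → AlgebraicClosure k)))
        ⊆ (V : Set (Fin m → AlgebraicClosure k)) := by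
      intro t
      induction t with
      | zero => simp
      | succ t ih =>
        have h1 : (t + 1) * d = t * d + d := by ring
        rw [h1, iter_image_add]
        exact subset_trans (Set.image_mono hWV) ih
    obtain ⟨r', rfl⟩ : ∃ r', r = r' + 1 := ⟨r - 1, by omega⟩
    have hrd : (afFrob k m)^[(r' + 1) * d] '' (V : Set (Fin m → AlgebraicClosure k)) = V :=
      iter_image_mul_left hrV d
    intro x hxV
    have hx2 : x ∈ (afFrob k m)^[(r' + 1) * d] '' (V : Set (Fin m → AlgebraicClosure k)) :=
      hrd.symm ▸ hxV
    have h3 : (r' + 1) * d = d + r' * d := by ring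
    rw [h3, iter_image_add] at hx2
    exact Set.image_mono (step r') hx2
  -- W is γ-invariant
  have hWinv : IsInvt k m γ W := by
    have hVinv := hV.2.1
    rw [IsInvt] at hVinv ⊢
    apply Submodule.ext
    intro x
    simp only [Submodule.mem_map]
    constructor
    · rintro ⟨y, ⟨z, hz, rfl⟩, rfl⟩
      have h1 : matEnd k m γ ((afFrob k m)^[d] z) = (afFrob k m)^[d] (matEnd k m γ z) := by
        have := matEnd_pow_comm γ 1 d z
        simpa [pow_one] using this
      rw [h1]
      exact ⟨matEnd k m γ z, hVinv ▸ Submodule.mem_map_of_mem hz, rfl⟩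
    · rintro ⟨z, hz, rfl⟩
      obtain ⟨y, hy, hyz⟩ : z ∈ Submodule.map (matEnd k m γ) V := hVinv.symm ▸ hz
      refine ⟨(afFrob k m)^[d] y, ⟨y, hy, rfl⟩, ?_⟩
      have h1 : matEnd k m γ ((afFrob k m)^[d] y) = (afFrob k m)^[d] (matEnd k m γ y) := by
        have := matEnd_pow_comm γ 1 d y
        simpa [pow_one] using this
      rw [h1, hyz]
  have hsupinv : IsInvt k m γ (V ⊔ W) := by
    rw [IsInvt, Submodule.map_sup, hV.2.1, hWinv]
  have hne : V ⊔ W ≠ ⊥ := fun h => hV.1 (le_bot_iff.mp (h ▸ le_sup_left))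
  have hlt := hV.2.2 (V ⊔ W) hne hsupinv hVW
  have hle : expV k m γ (V ⊔ W) ≤ e := by
    apply Nat.sInf_le
    refine ⟨he1, c, fun v hv => ?_⟩
    obtain ⟨a, ha, b, hb, rfl⟩ := Submodule.mem_sup.mp hv
    rw [map_add, hc a ha, hW b hb, hcc, smul_add]
  omega

/-- Pairwise disjointness of the `σ^i(V)` for distinct `i, j < r`. -/
theorem pair_triv (γ : Matrix.GeneralLinearGroup (Fin m) k)
    (V : Submodule (AlgebraicClosure k) (Fin m → AlgebraicClosure k))
    (hV : IsProper k m γ V) (r : ℕ) (hr : 0 < r)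
    (hrV : (afFrob k m)^[r] '' (V : Set (Fin m → AlgebraicClosure k)) = V)
    (hrmin : ∀ j : ℕ, 0 < j → j < r →
      (afFrob k m)^[j] '' (V : Set (Fin m → AlgebraicClosure k)) ≠ V)
    (i j : ℕ) (hi : i < r) (hj : j < r) (hij : i < j)
    {u : Fin m → AlgebraicClosure k}
    (h1 : u ∈ (afFrob k m)^[i] '' (V : Set (Fin m → AlgebraicClosure k)))
    (h2 : u ∈ (afFrob k m)^[j] '' (V : Set (Fin m → AlgebraicClosure k))) : u = 0 := by
  set d := j - i with hd
  have hj' : j = i + d := by omega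
  rw [hj', iter_image_add] at h2
  obtain ⟨x, hx, hxu⟩ := h1
  obtain ⟨y, hy, hyu⟩ := h2
  have hxy : x = y := afFrob_iter_injective i (hxu.trans hyu.symm)
  subst hxy
  have hx0 : x = 0 :=
    inter_triv γ V hV r hr hrV d (by omega) (hrmin d (by omega) (by omega)) hx hy
  rw [← hxu, hx0, afFrob_iter_zero]



-- Projective layer

theorem afFrob_ne_zero {v : Fin m → AlgebraicClosure k} (hv : v ≠ 0) :
    afFrob k m v ≠ 0 := by
  simpa using afFrob_iter_ne_zero 1 hv

theorem afFrob_smul (c : AlgebraicClosure k) (v : Fin m → AlgebraicClosure k) :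
    afFrob k m (c • v) = phi k c • afFrob k m v := by
  simpa using afFrob_iter_smul 1 c v

theorem projFrob_eq (P : Projectivization (AlgebraicClosure k) (Fin m → AlgebraicClosure k)) :
    projFrob k m P = Projectivization.mk (AlgebraicClosure k) (afFrob k m P.rep)
      (afFrob_ne_zero P.rep_nonzero) := rfl

theorem projFrob_mk {v : Fin m → AlgebraicClosure k} (hv : v ≠ 0) :
    projFrob k m (Projectivization.mk (AlgebraicClosure k) v hv) =
      Projectivization.mk (AlgebraicClosure k) (afFrob k m v) (afFrob_ne_zero hv) := by
  rw [projFrob_eq]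
  rw [Projectivization.mk_eq_mk_iff']
  obtain ⟨a, ha⟩ := Projectivization.exists_smul_eq_mk_rep (AlgebraicClosure k) v hv
  refine ⟨phi k a, ?_⟩
  rw [← ha, Units.smul_def, afFrob_smul]

theorem projFrob_iter_rep (M : ℕ)
    (P : Projectivization (AlgebraicClosure k) (Fin m → AlgebraicClosure k)) :
    (projFrob k m)^[M] P = Projectivization.mk (AlgebraicClosure k)
      ((afFrob k m)^[M] P.rep) (afFrob_iter_ne_zero M P.rep_nonzero) := by
  induction M with
  | zero => exact (Projectivization.mk_rep P).symm
  | succ M ih =>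
    rw [Function.iterate_succ_apply', ih, projFrob_mk]
    rw [Projectivization.mk_eq_mk_iff']
    exact ⟨1, by rw [one_smul, Function.iterate_succ_apply']⟩

theorem projFrob_iter_mk (j : ℕ) {v : Fin m → AlgebraicClosure k} (hv : v ≠ 0) :
    (projFrob k m)^[j] (Projectivization.mk (AlgebraicClosure k) v hv) =
      Projectivization.mk (AlgebraicClosure k) ((afFrob k m)^[j] v)
        (afFrob_iter_ne_zero j hv) := by
  rw [projFrob_iter_rep, Projectivization.mk_eq_mk_iff']
  obtain ⟨a, ha⟩ := Projectivization.exists_smul_eq_mk_rep (AlgebraicClosure k) v hv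
  refine ⟨(phi k)^[j] a, ?_⟩
  rw [← ha, Units.smul_def, afFrob_iter_smul]

theorem projFrob_injective : Function.Injective (projFrob k m) := by
  intro P Q h
  rw [projFrob_eq, projFrob_eq, Projectivization.mk_eq_mk_iff'] at h
  obtain ⟨b, hb⟩ := h
  obtain ⟨b₀, rfl⟩ := phi_surjective (k := k) b
  have h2 : b₀ • Q.rep = P.rep := afFrob_injective (by rw [afFrob_smul, hb])
  rw [← Projectivization.mk_rep P, ← Projectivization.mk_rep Q,
    Projectivization.mk_eq_mk_iff']
  exact ⟨b₀, h2⟩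

/-- The points fixed by `σ^M` form a finite set. -/
theorem fix_finite (M : ℕ) (hM : 1 ≤ M) :
    {P : Projectivization (AlgebraicClosure k) (Fin m → AlgebraicClosure k) |
      (projFrob k m)^[M] P = P}.Finite := by
  have hq2 : 1 < Fintype.card k := Fintype.one_lt_card
  have hqM : 1 < Fintype.card k ^ M := Nat.one_lt_pow (by omega) hq2
  set S : Set (AlgebraicClosure k) := {x | x ^ (Fintype.card k ^ M) = x} with hSdef
  have hSfin : S.Finite := by
    have hp : (Polynomial.X ^ (Fintype.card k ^ M) - Polynomial.X :
        Polynomial (AlgebraicClosure k)) ≠ 0 := by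
      intro h
      have h2 := congrArg (fun p => Polynomial.coeff p (Fintype.card k ^ M)) h
      simp only [Polynomial.coeff_sub, Polynomial.coeff_X_pow, Polynomial.coeff_X,
        if_pos rfl] at h2
      rw [if_neg (by omega : ¬ (1 = Fintype.card k ^ M))] at h2
      simp at h2
    apply (Polynomial.finite_setOf_isRoot hp).subset
    intro x hx
    simp only [Set.mem_setOf_eq, Polynomial.IsRoot, Polynomial.eval_sub, Polynomial.eval_pow,
      Polynomial.eval_X, sub_eq_zero]
    exact hx
  have hTfin : {v : {w : Fin m → AlgebraicClosure k // w ≠ 0} |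
      ∀ i, (v : Fin m → AlgebraicClosure k) i ∈ S}.Finite := by
    have hpi : {v : Fin m → AlgebraicClosure k | ∀ i, v i ∈ S}.Finite := by
      have := Set.Finite.pi (fun _ : Fin m => hSfin)
      apply this.subset
      intro v hv
      simp only [Set.mem_pi, Set.mem_univ, forall_true_left]
      exact fun i => hv i
    exact Set.Finite.preimage Subtype.val_injective.injOn hpi
  apply (hTfin.image (fun v => Projectivization.mk (AlgebraicClosure k) v.1 v.2)).subset
  intro P hP
  have hP' : Projectivization.mk (AlgebraicClosure k) ((afFrob k m)^[M] P.rep)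
      (afFrob_iter_ne_zero M P.rep_nonzero) = Projectivization.mk (AlgebraicClosure k)
      P.rep P.rep_nonzero := by
    rw [← projFrob_iter_rep]
    rw [Set.mem_setOf_eq] at hP
    rw [hP, Projectivization.mk_rep]
  obtain ⟨a, ha⟩ := (Projectivization.mk_eq_mk_iff _ _ _ _ _).1 hP'
  -- ha : a • P.rep = (afFrob k m)^[M] P.rep
  obtain ⟨z, hz⟩ := IsAlgClosed.exists_pow_nat_eq ((a⁻¹ : (AlgebraicClosure k)ˣ) :
    AlgebraicClosure k) (n := Fintype.card k ^ M - 1) (by omega)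
  have hz0 : z ≠ 0 := by
    intro h
    rw [h, zero_pow (by omega)] at hz
    exact (a⁻¹).ne_zero hz.symm
  have hw0 : z • P.rep ≠ 0 := smul_ne_zero hz0 P.rep_nonzero
  refine ⟨⟨z • P.rep, hw0⟩, ?_, ?_⟩
  · intro i
    have hrep : P.rep i ^ (Fintype.card k ^ M) = (a : AlgebraicClosure k) * P.rep i := by
      have h1 : (afFrob k m)^[M] P.rep i = P.rep i ^ (Fintype.card k ^ M) := by
        rw [afFrob_iter_apply, phi_iter_apply]
      rw [← h1, ← ha]
      rfl
    have hzpow : z ^ (Fintype.card k ^ M) = ((a : AlgebraicClosure k))⁻¹ * z := by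
      have h1 : Fintype.card k ^ M = (Fintype.card k ^ M - 1) + 1 := by omega
      rw [h1, pow_succ, hz]
      simp [Units.val_inv_eq_inv_val]
    show (z • P.rep) i ^ (Fintype.card k ^ M) = (z • P.rep) i
    have h2 : (z • P.rep) i = z * P.rep i := rfl
    rw [h2, mul_pow, hrep, hzpow]
    field_simp
  · show Projectivization.mk (AlgebraicClosure k) (z • P.rep) hw0 = P
    have heq : Projectivization.mk (AlgebraicClosure k) (z • P.rep) hw0 =
        Projectivization.mk (AlgebraicClosure k) P.rep P.rep_nonzero := by
      rw [Projectivization.mk_eq_mk_iff']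
      exact ⟨z, rfl⟩
    rw [heq, Projectivization.mk_rep]

theorem B_image (M i : ℕ) (V : Submodule (AlgebraicClosure k) (Fin m → AlgebraicClosure k)) :
    {P : Projectivization (AlgebraicClosure k) (Fin m → AlgebraicClosure k) |
      P.rep ∈ (afFrob k m)^[i] '' (V : Set (Fin m → AlgebraicClosure k)) ∧
      (projFrob k m)^[M] P = P} =
    (projFrob k m)^[i] '' {P : Projectivization (AlgebraicClosure k)
        (Fin m → AlgebraicClosure k) |
      P.rep ∈ (V : Set (Fin m → AlgebraicClosure k)) ∧ (projFrob k m)^[M] P = P} := by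
  have hcommFM : ∀ Q : Projectivization (AlgebraicClosure k) (Fin m → AlgebraicClosure k),
      (projFrob k m)^[M] ((projFrob k m)^[i] Q)
      = (projFrob k m)^[i] ((projFrob k m)^[M] Q) := fun Q => by
    rw [← Function.iterate_add_apply, ← Function.iterate_add_apply, Nat.add_comm]
  ext Q
  constructor
  · rintro ⟨hQV, hQfix⟩
    obtain ⟨v, hv, hvQ⟩ := hQV
    have hv0 : v ≠ 0 := by
      rintro rfl
      exact Q.rep_nonzero (by rw [← hvQ, afFrob_iter_zero])
    have hFi : (projFrob k m)^[i] (Projectivization.mk (AlgebraicClosure k) v hv0) = Q := by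
      have heq : Projectivization.mk (AlgebraicClosure k) ((afFrob k m)^[i] v)
          (afFrob_iter_ne_zero i hv0)
          = Projectivization.mk (AlgebraicClosure k) Q.rep Q.rep_nonzero := by
        rw [Projectivization.mk_eq_mk_iff']
        exact ⟨1, by rw [one_smul, hvQ]⟩
      rw [projFrob_iter_mk, heq, Projectivization.mk_rep]
    refine ⟨Projectivization.mk (AlgebraicClosure k) v hv0, ⟨?_, ?_⟩, hFi⟩
    · obtain ⟨a, ha⟩ := Projectivization.exists_smul_eq_mk_rep (AlgebraicClosure k) v hv0
      show _ ∈ (V : Set (Fin m → AlgebraicClosure k))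
      rw [← ha, Units.smul_def]
      exact V.smul_mem _ hv
    · apply projFrob_injective.iterate i
      rw [← hcommFM, hFi, hQfix]
  · rintro ⟨P, ⟨hPV, hPfix⟩, rfl⟩
    refine ⟨?_, by rw [hcommFM, hPfix]⟩
    rw [projFrob_iter_rep]
    obtain ⟨a, ha⟩ := Projectivization.exists_smul_eq_mk_rep (AlgebraicClosure k)
      ((afFrob k m)^[i] P.rep) (afFrob_iter_ne_zero i P.rep_nonzero)
    show _ ∈ (afFrob k m)^[i] '' (V : Set (Fin m → AlgebraicClosure k))
    rw [← ha, Units.smul_def]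
    exact (sigmaSub i V).smul_mem _ (Set.mem_image_of_mem _ hPV)

theorem ncard_biUnion_eq {α : Type*} (A : ℕ → Set α) (r : ℕ) (F : Set α) (hF : F.Finite)
    (hsub : ∀ i, A i ⊆ F)
    (hdisj : ∀ i j, i < r → j < r → i ≠ j → ∀ u, u ∈ A i → u ∈ A j → False)
    (hcard : ∀ i, (A i).ncard = (A 0).ncard) :
    ∀ t, t ≤ r → (⋃ i ∈ Finset.range t, A i).ncard = t * (A 0).ncard := by
  intro t
  induction t with
  | zero => intro _; simp
  | succ t ih =>
    intro ht
    have hd : Disjoint (A t) (⋃ i ∈ Finset.range t, A i) := by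
      rw [Set.disjoint_left]
      intro P hPt hPU
      simp only [Set.mem_iUnion, Finset.mem_range, exists_prop] at hPU
      obtain ⟨i, hi, hPi⟩ := hPU
      exact hdisj t i (by omega) (by omega) (by omega) P hPt hPi
    have hUf : (⋃ i ∈ Finset.range t, A i).Finite := by
      apply hF.subset
      exact Set.iUnion₂_subset fun i _ => hsub i
    rw [Finset.range_add_one, Finset.set_biUnion_insert,
      Set.ncard_union_eq hd (hF.subset (hsub t)) hUf, hcard t, ih (by omega)]
    ring

end S18

/-- Let `V` be a proper `γ`-invariant subspace of degree `r` (the least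
positive integer with `σ^r(V) = V`) and `V_G = ℙ(V) ∪ ℙ(σ(V)) ∪ ⋯ ∪
ℙ(σ^{r−1}(V))`.  Then for `M ≥ 1`: if `r ∤ M` no point of `V_G` is fixed by
`σ^M`, and if `r ∣ M` the number of points of `V_G` fixed by `σ^M` is `r`
times the number of points of `ℙ(V)` fixed by `σ^M`
(i.e. `Z(V_G/k, x) = Z(V/k_r, x^r)`). -/
theorem stmt18 (k : Type*) [Field k] [Fintype k] (N : ℕ)
    (γ : Matrix.GeneralLinearGroup (Fin (N + 1)) k)
    (V : Submodule (AlgebraicClosure k) (Fin (N + 1) → AlgebraicClosure k))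
    (hV : IsProper k (N + 1) γ V)
    (r : ℕ) (hr : 0 < r)
    (hrV : (afFrob k (N + 1))^[r] '' (V : Set (Fin (N + 1) → AlgebraicClosure k)) = V)
    (hrmin : ∀ j : ℕ, 0 < j → j < r →
      (afFrob k (N + 1))^[j] '' (V : Set (Fin (N + 1) → AlgebraicClosure k)) ≠ V)
    (VG : Set (Projectivization (AlgebraicClosure k) (Fin (N + 1) → AlgebraicClosure k)))
    (hVG : VG = ⋃ i ∈ Finset.range r,
      projSet k (N + 1)
        ((afFrob k (N + 1))^[i] '' (V : Set (Fin (N + 1) → AlgebraicClosure k))))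
    (M : ℕ) (hM : 1 ≤ M) :
    (¬ r ∣ M → {P ∈ VG | (projFrob k (N + 1))^[M] P = P} = ∅) ∧
    (r ∣ M →
      ({P ∈ VG | (projFrob k (N + 1))^[M] P = P}).ncard =
        r * ({P ∈ projSet k (N + 1) (V : Set (Fin (N + 1) → AlgebraicClosure k)) |
          (projFrob k (N + 1))^[M] P = P}).ncard) := by
  classical
  have h0 : (afFrob k (N + 1))^[0] '' (V : Set (Fin (N + 1) → AlgebraicClosure k))
      = (V : Set (Fin (N + 1) → AlgebraicClosure k)) := by
    rw [Function.iterate_zero, Set.image_id]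
  -- fixed points of σ^M in ℙ(σ^i V) also lie in ℙ(σ^{(M+i) mod r} V)
  have hfixmem : ∀ (P : Projectivization (AlgebraicClosure k)
      (Fin (N + 1) → AlgebraicClosure k)) (i : ℕ),
      P.rep ∈ (afFrob k (N + 1))^[i] '' (V : Set (Fin (N + 1) → AlgebraicClosure k)) →
      (projFrob k (N + 1))^[M] P = P →
      P.rep ∈ (afFrob k (N + 1))^[(M + i) % r] ''
        (V : Set (Fin (N + 1) → AlgebraicClosure k)) := by
    intro P i hPV hfix
    have h1 : Projectivization.mk (AlgebraicClosure k) ((afFrob k (N + 1))^[M] P.rep)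
        (S18.afFrob_iter_ne_zero M P.rep_nonzero)
        = Projectivization.mk (AlgebraicClosure k) P.rep P.rep_nonzero := by
      rw [← S18.projFrob_iter_rep, hfix, Projectivization.mk_rep]
    obtain ⟨a, ha⟩ := (Projectivization.mk_eq_mk_iff _ _ _ _ _).1 h1
    have h2 : (afFrob k (N + 1))^[M] P.rep ∈ (afFrob k (N + 1))^[M + i] ''
        (V : Set (Fin (N + 1) → AlgebraicClosure k)) := by
      rw [S18.iter_image_add]
      exact Set.mem_image_of_mem _ hPV
    rw [S18.iter_image_mod hr hrV] at h2
    have h3 : P.rep = ((a : AlgebraicClosure k)⁻¹) • ((afFrob k (N + 1))^[M] P.rep) := by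
      rw [← ha, Units.smul_def, smul_smul, inv_mul_cancel₀ a.ne_zero, one_smul]
    rw [h3]
    exact (S18.sigmaSub ((M + i) % r) V).smul_mem _ h2
  have hpair : ∀ i j : ℕ, i < r → j < r → i ≠ j →
      ∀ u : Fin (N + 1) → AlgebraicClosure k,
      u ∈ (afFrob k (N + 1))^[i] '' (V : Set (Fin (N + 1) → AlgebraicClosure k)) →
      u ∈ (afFrob k (N + 1))^[j] '' (V : Set (Fin (N + 1) → AlgebraicClosure k)) →
      u = 0 := by
    intro i j hi hj hij u h1 h2
    rcases Nat.lt_or_ge i j with h | h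
    · exact S18.pair_triv γ V hV r hr hrV hrmin i j hi hj h h1 h2
    · exact S18.pair_triv γ V hV r hr hrV hrmin j i hj hi (by omega) h2 h1
  constructor
  · -- case r ∤ M
    intro hnd
    rw [Set.eq_empty_iff_forall_notMem]
    rintro P ⟨hPVG, hfix⟩
    rw [hVG] at hPVG
    simp only [Set.mem_iUnion, Finset.mem_range, exists_prop] at hPVG
    obtain ⟨i, hi, hPi⟩ := hPVG
    have hPi' : P.rep ∈ (afFrob k (N + 1))^[i] ''
        (V : Set (Fin (N + 1) → AlgebraicClosure k)) := hPi
    have h2 := hfixmem P i hPi' hfix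
    have hji : (M + i) % r ≠ i := by
      intro h
      apply hnd
      have h1 : (M + i) % r = (0 + i) % r := by
        rw [h, Nat.zero_add, Nat.mod_eq_of_lt hi]
      have h2' : M % r = 0 % r := Nat.ModEq.add_right_cancel' i h1
      exact Nat.dvd_of_mod_eq_zero (by simpa using h2')
    exact P.rep_nonzero (hpair _ _ (Nat.mod_lt _ hr) hi hji _ h2 hPi')
  · -- case r ∣ M
    intro _
    set B : ℕ → Set (Projectivization (AlgebraicClosure k)
        (Fin (N + 1) → AlgebraicClosure k)) := fun i =>
      {P : Projectivization (AlgebraicClosure k) (Fin (N + 1) → AlgebraicClosure k) |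
        P.rep ∈ (afFrob k (N + 1))^[i] '' (V : Set (Fin (N + 1) → AlgebraicClosure k)) ∧
        (projFrob k (N + 1))^[M] P = P} with hB
    have hsub : ∀ i, B i ⊆ {P : Projectivization (AlgebraicClosure k)
        (Fin (N + 1) → AlgebraicClosure k) | (projFrob k (N + 1))^[M] P = P} :=
      fun i P hP => hP.2
    have hdisj : ∀ i j, i < r → j < r → i ≠ j →
        ∀ P, P ∈ B i → P ∈ B j → False := by
      intro i j hi hj hij P hPi hPj
      exact P.rep_nonzero (hpair i j hi hj hij P.rep hPi.1 hPj.1)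
    have hcard : ∀ i, (B i).ncard = (B 0).ncard := by
      intro i
      have hB0 : B 0 = {P : Projectivization (AlgebraicClosure k)
          (Fin (N + 1) → AlgebraicClosure k) |
          P.rep ∈ (V : Set (Fin (N + 1) → AlgebraicClosure k)) ∧
          (projFrob k (N + 1))^[M] P = P} := by
        rw [hB]
        simp only [h0]
      rw [hB0, show B i = _ from S18.B_image M i V,
        Set.ncard_image_of_injective _ (S18.projFrob_injective.iterate i)]
    have hkey := S18.ncard_biUnion_eq B r _ (S18.fix_finite M hM) hsub hdisj hcard r le_rfl
    have hsep : {P ∈ VG | (projFrob k (N + 1))^[M] P = P} = ⋃ i ∈ Finset.range r, B i := by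
      rw [hVG]
      ext P
      simp only [Set.mem_setOf_eq, Set.mem_iUnion, Finset.mem_range, exists_prop, hB,
        projSet]
      tauto
    have hB0' : {P ∈ projSet k (N + 1) (V : Set (Fin (N + 1) → AlgebraicClosure k)) |
        (projFrob k (N + 1))^[M] P = P} = B 0 := by
      ext P
      simp only [Set.mem_setOf_eq, hB, projSet, h0]
    rw [hsep, hkey, hB0']
end
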